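/- arXiv:1909.13861 — 10 statements merged into one kernel-verified Lean document; each statement's English description precedes it below -/
import Mathlib

section
/- Let (A, B, u_O, u_L) be a finite two-player bimatrix game and let b ∈ B be an action of the learner that is not weakly dominated. Then there exist a mixed strategy α' ∈ Δ(A) and a real number κ > 0 such that u_L(α', b) ≥ u_L(α', b') + κ for every b' ∈ B with b' ≠ b. -/
/-!
The payoff differences `u_L(a, b') - u_L(a, b)` form a matrix `M`, and `b` is not weakly
dominated exactly when `M` maps no mixed strategy supported on `B \ {b}` into the nonnegative
orthant. The image of that face of the simplex is compact and convex, so it can be strictly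
separated from the orthant; the separating functional is nonnegative on the orthant, hence
is a nonnegative weighting of the optimizer's actions, which normalizes to `α'`.
-/

open Finset

/-- A probability distribution (mixed strategy) on a finite type. -/
def IsDist {X : Type*} [Fintype X] (f : X → ℝ) : Prop :=
  (∀ x, 0 ≤ f x) ∧ ∑ x, f x = 1

lemma isDist_uniform (X : Type*) [Fintype X] [Nonempty X] :
    IsDist fun _ : X => (Fintype.card X : ℝ)⁻¹ := by
  refine ⟨fun _ => by positivity, ?_⟩
  rw [sum_const, card_univ, nsmul_eq_mul, mul_inv_cancel₀]
  exact_mod_cast Fintype.card_ne_zero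

lemma isDist_div_sum {X : Type*} [Fintype X] {y : X → ℝ} (hy : 0 ≤ y) (hs : 0 < ∑ x, y x) :
    IsDist fun x => y x / ∑ x', y x' :=
  ⟨fun x => div_nonneg (hy x) hs.le, by rw [← sum_div, div_self hs.ne']⟩

lemma ContinuousLinearMap.apply_eq_dotProduct {A : Type*} [Fintype A] [DecidableEq A]
    (f : (A → ℝ) →L[ℝ] ℝ) (x : A → ℝ) : f x = x ⬝ᵥ fun a => f (Pi.single a 1) := by
  conv_lhs => rw [← univ_sum_single x]
  simp only [map_sum, dotProduct]
  refine sum_congr rfl fun a _ => ?_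
  rw [← smul_eq_mul, ← map_smul, ← Pi.single_smul, smul_eq_mul, mul_one]

lemma nonneg_of_forall_lt_mul {v c : ℝ} (h : ∀ t : ℝ, 0 ≤ t → v < t * c) : 0 ≤ c := by
  by_contra! hc
  have hv : v < 0 := by simpa using h 0 le_rfl
  have := h (v / c) (div_nonneg_of_nonpos hv.le hc.le)
  rw [div_mul_cancel₀ v hc.ne] at this
  exact this.false

lemma exists_nonneg_dotProduct_lt_of_disjoint_Ici {A : Type*} [Fintype A]
    {C : Set (A → ℝ)} (hconv : Convex ℝ C) (hcomp : IsCompact C)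
    (hdisj : Disjoint C (Set.Ici 0)) :
    ∃ y : A → ℝ, 0 ≤ y ∧ ∃ u < 0, ∀ x ∈ C, y ⬝ᵥ x < u := by
  classical
  obtain ⟨f, u, v, hfC, huv, hfK⟩ := geometric_hahn_banach_compact_closed hconv hcomp
    (convex_Ici 0) isClosed_Ici hdisj
  have hv : v < 0 := by simpa using hfK 0 Set.self_mem_Ici
  refine ⟨fun a => f (Pi.single a 1), fun a => ?_, u, huv.trans hv, fun x hx => ?_⟩
  · refine nonneg_of_forall_lt_mul (v := v) fun t ht => ?_
    have hta : 0 ≤ t • (Pi.single a 1 : A → ℝ) :=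
      smul_nonneg ht (Pi.single_nonneg.mpr zero_le_one)
    simpa using hfK _ hta
  · rw [dotProduct_comm, ← f.apply_eq_dotProduct]
    exact hfC x hx

lemma exists_isDist_dotProduct_add_le_of_disjoint_Ici {A : Type*} [Fintype A] [Nonempty A]
    {C : Set (A → ℝ)} (hconv : Convex ℝ C) (hcomp : IsCompact C)
    (hdisj : Disjoint C (Set.Ici 0)) :
    ∃ (α : A → ℝ) (κ : ℝ), IsDist α ∧ 0 < κ ∧ ∀ x ∈ C, α ⬝ᵥ x + κ ≤ 0 := by
  rcases C.eq_empty_or_nonempty with rfl | ⟨x₀, hx₀⟩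
  · exact ⟨_, 1, isDist_uniform A, one_pos, by simp⟩
  obtain ⟨y, hy, u, hu, hyC⟩ := exists_nonneg_dotProduct_lt_of_disjoint_Ici hconv hcomp hdisj
  have hs : 0 < ∑ a, y a := by
    refine (sum_nonneg fun a _ => hy a).lt_of_ne fun hs => ?_
    have hy0 : y = 0 := funext fun a =>
      (sum_eq_zero_iff_of_nonneg fun a _ => hy a).mp hs.symm a (mem_univ a)
    have := hyC x₀ hx₀
    rw [hy0, zero_dotProduct] at this
    linarith
  refine ⟨fun a => y a / ∑ a', y a', -u / ∑ a', y a', isDist_div_sum hy hs,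
    div_pos (neg_pos.mpr hu) hs, fun x hx => ?_⟩
  have hα : (fun a => y a / ∑ a', y a') ⬝ᵥ x = (y ⬝ᵥ x) / ∑ a', y a' := by
    simp only [dotProduct, div_mul_eq_mul_div, sum_div]
  rw [hα, ← add_div]
  exact div_nonpos_of_nonpos_of_nonneg (by linarith [hyC x hx]) hs.le

def simplexAvoiding {B : Type*} [Fintype B] (b : B) : Set (B → ℝ) :=
  stdSimplex ℝ B ∩ {β | β b = 0}

lemma convex_simplexAvoiding {B : Type*} [Fintype B] (b : B) :
    Convex ℝ (simplexAvoiding b) :=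
  (convex_stdSimplex ℝ B).inter (convex_hyperplane (LinearMap.proj b).isLinear 0)

lemma isCompact_simplexAvoiding {B : Type*} [Fintype B] (b : B) :
    IsCompact (simplexAvoiding b) :=
  (isCompact_stdSimplex ℝ B).inter_right (isClosed_singleton.preimage (continuous_apply b))

lemma single_mem_simplexAvoiding {B : Type*} [Fintype B] [DecidableEq B] {b b' : B}
    (hb' : b' ≠ b) : Pi.single b' 1 ∈ simplexAvoiding b :=
  ⟨single_mem_stdSimplex ℝ b', Pi.single_eq_of_ne hb'.symm 1⟩

theorem stmt0_general {A B : Type*} [Fintype A] [Fintype B] [Nonempty A]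
    (uL : A → B → ℝ) (b : B)
    (hnd : ¬ ∃ β : B → ℝ, IsDist β ∧ β b = 0 ∧
      ∀ a : A, uL a b ≤ ∑ b', β b' * uL a b') :
    ∃ (α' : A → ℝ) (κ : ℝ), IsDist α' ∧ 0 < κ ∧
      ∀ b' : B, b' ≠ b → (∑ a, α' a * uL a b') + κ ≤ ∑ a, α' a * uL a b := by
  classical
  let M : Matrix A B ℝ := Matrix.of fun a b' => uL a b' - uL a b
  have hdisj : Disjoint (M.mulVecLin '' simplexAvoiding b) (Set.Ici 0) := by
    rw [Set.disjoint_left]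
    rintro _ ⟨β, ⟨⟨hβ0, hβ1⟩, hβb⟩, rfl⟩ hMβ
    refine hnd ⟨β, ⟨hβ0, hβ1⟩, hβb, fun a => ?_⟩
    have hgain : 0 ≤ ∑ b', (uL a b' - uL a b) * β b' := hMβ a
    simp only [sub_mul, sum_sub_distrib, ← mul_sum, hβ1, mul_one, sub_nonneg] at hgain
    simpa only [mul_comm] using hgain
  obtain ⟨α, κ, hα, hκ, hC⟩ := exists_isDist_dotProduct_add_le_of_disjoint_Ici
    ((convex_simplexAvoiding b).linear_image M.mulVecLin)
    ((isCompact_simplexAvoiding b).image M.mulVecLin.continuous_of_finiteDimensional)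
    hdisj
  refine ⟨α, κ, hα, hκ, fun b' hb' => ?_⟩
  have h := hC _ ⟨_, single_mem_simplexAvoiding hb', rfl⟩
  simp only [Matrix.mulVecLin_apply, Matrix.mulVec_single_one, dotProduct, Matrix.col_apply,
    M, Matrix.of_apply, mul_sub, sum_sub_distrib] at h
  linarith

/-- If an action `b` of the learner is not weakly dominated (there is no mixed
strategy supported on `B \ {b}` that weakly dominates it), then there is a mixed
strategy `α'` of the optimizer and `κ > 0` with
`u_L(α', b) ≥ u_L(α', b') + κ` for every `b' ≠ b`. -/
theorem stmt0 {A B : Type*} [Fintype A] [Fintype B] [Nonempty A] [Nonempty B]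
    (uO uL : A → B → ℝ) (b : B)
    (hnd : ¬ ∃ β : B → ℝ, IsDist β ∧ β b = 0 ∧
      ∀ a : A, uL a b ≤ ∑ b', β b' * uL a b') :
    ∃ (α' : A → ℝ) (κ : ℝ), IsDist α' ∧ 0 < κ ∧
      ∀ b' : B, b' ≠ b → (∑ a, α' a * uL a b') + κ ≤ ∑ a, α' a * uL a b :=
  stmt0_general uL b hnd
end

section
/- Let (A, B, u_O, u_L) be a finite two-player bimatrix game with |u_O(a,b)| ≤ 1 for all a, b. Suppose α* ∈ Δ(A), b ∈ B and g > 0 satisfy u_L(α*, b) ≥ u_L(α*, b') + g for all b' ≠ b. Let T ≥ 1 and let p_1, …, p_T ∈ Δ(B) be any sequence of mixed plays of the learner, and set R = T·u_L(α*, b) − Σ_{t=1}^T u_L(α*, p_t) (the learner's regret when the optimizer plays α* every round, since b is then the best fixed action). Then Σ_{t=1}^T u_O(α*, p_t) ≥ u_O(α*, b)·T − 2R/g. -/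
open Finset

/-- If `b` is a strict best response (by gap `g > 0`) to `α*`, then against any
sequence of mixed plays of the learner with regret `R` (measured against the
optimizer playing `α*` every round), the optimizer's total utility is at least
`u_O(α*, b)·T − 2R/g`. -/
theorem stmt1 {A B : Type*} [Fintype A] [Fintype B] [Nonempty A] [Nonempty B]
    (uO uL : A → B → ℝ) (hO : ∀ a b, |uO a b| ≤ 1)
    (α : A → ℝ) (hα : IsDist α) (b : B) (g : ℝ) (hg : 0 < g)
    (hgap : ∀ b' : B, b' ≠ b → (∑ a, α a * uL a b') + g ≤ ∑ a, α a * uL a b)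
    (T : ℕ) (hT : 1 ≤ T) (p : Fin T → B → ℝ) (hp : ∀ t, IsDist (p t))
    (R : ℝ)
    (hR : R = (T : ℝ) * (∑ a, α a * uL a b)
          - ∑ t : Fin T, ∑ b', p t b' * ∑ a, α a * uL a b') :
    ∑ t : Fin T, ∑ b', p t b' * ∑ a, α a * uO a b'
      ≥ (∑ a, α a * uO a b) * T - 2 * R / g := by
  classical
  obtain ⟨hαpos, hαsum⟩ := hα
  set U : B → ℝ := fun b' => ∑ a, α a * uL a b' with hUdef
  set V : B → ℝ := fun b' => ∑ a, α a * uO a b' with hVdef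
  have hVabs : ∀ b', |V b'| ≤ 1 := by
    intro b'
    calc |V b'| ≤ ∑ a, |α a * uO a b'| := Finset.abs_sum_le_sum_abs _ _
    _ ≤ ∑ a, α a := by
        apply Finset.sum_le_sum; intro a _
        rw [abs_mul, abs_of_nonneg (hαpos a)]
        calc α a * |uO a b'| ≤ α a * 1 :=
              mul_le_mul_of_nonneg_left (hO a b') (hαpos a)
          _ = α a := mul_one _
    _ = 1 := hαsum
  have hrewrite : ∀ (W : B → ℝ) (t : Fin T),
      W b - ∑ b', p t b' * W b' = ∑ b', p t b' * (W b - W b') := by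
    intro W t
    have hsum := (hp t).2
    simp [mul_sub, Finset.sum_sub_distrib, ← Finset.sum_mul, hsum]
  have hq : ∀ t : Fin T, 1 - p t b = ∑ b' ∈ Finset.univ.erase b, p t b' := by
    intro t
    rw [Finset.sum_erase_eq_sub (Finset.mem_univ b), (hp t).2]
  have key1 : ∀ t : Fin T, g * (1 - p t b) ≤ U b - ∑ b', p t b' * U b' := by
    intro t
    rw [hrewrite U t, hq t, Finset.mul_sum]
    have hsub : Finset.univ.erase b ⊆ Finset.univ := Finset.subset_univ _
    calc ∑ b' ∈ Finset.univ.erase b, g * p t b'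
        ≤ ∑ b' ∈ Finset.univ.erase b, p t b' * (U b - U b') := by
          apply Finset.sum_le_sum; intro b' hb'
          have hne : b' ≠ b := Finset.ne_of_mem_erase hb'
          have := hgap b' hne
          nlinarith [(hp t).1 b']
      _ ≤ ∑ b', p t b' * (U b - U b') := by
          apply Finset.sum_le_sum_of_subset_of_nonneg hsub
          intro b' _ hb'
          have : b' = b := by
            by_contra h
            exact hb' (Finset.mem_erase.mpr ⟨h, Finset.mem_univ _⟩)
          simp [this]
  have key2 : ∀ t : Fin T, V b - ∑ b', p t b' * V b' ≤ 2 * (1 - p t b) := by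
    intro t
    rw [hrewrite V t, hq t, Finset.mul_sum]
    rw [← Finset.add_sum_erase Finset.univ (fun b' => p t b' * (V b - V b'))
        (Finset.mem_univ b)]
    simp only [sub_self, mul_zero, zero_add]
    apply Finset.sum_le_sum
    intro b' _
    have h1 := abs_le.mp (hVabs b)
    have h2 := abs_le.mp (hVabs b')
    nlinarith [(hp t).1 b']
  have hQ : g * ∑ t : Fin T, (1 - p t b) ≤ R := by
    rw [hR, Finset.mul_sum]
    have : (T : ℝ) * U b - ∑ t : Fin T, ∑ b', p t b' * U b'
        = ∑ t : Fin T, (U b - ∑ b', p t b' * U b') := by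
      rw [Finset.sum_sub_distrib, Finset.sum_const, Finset.card_univ,
        Fintype.card_fin, nsmul_eq_mul]
    rw [this]
    exact Finset.sum_le_sum fun t _ => key1 t
  have hsumV : (V b) * T - 2 * ∑ t : Fin T, (1 - p t b)
      ≤ ∑ t : Fin T, ∑ b', p t b' * V b' := by
    have : (V b) * T - ∑ t : Fin T, ∑ b', p t b' * V b'
        = ∑ t : Fin T, (V b - ∑ b', p t b' * V b') := by
      rw [Finset.sum_sub_distrib, Finset.sum_const, Finset.card_univ,
        Fintype.card_fin, nsmul_eq_mul, mul_comm]
    have h2 := Finset.sum_le_sum fun t (_ : t ∈ Finset.univ) => key2 t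
    rw [← Finset.mul_sum] at h2
    linarith [this ▸ h2]
  have hQR : 2 * ∑ t : Fin T, (1 - p t b) ≤ 2 * R / g := by
    rw [le_div_iff₀ hg]
    nlinarith
  linarith
end

section
/- (Theorem 1) Let (A, B, u_O, u_L) be a finite two-player bimatrix game with |u_O(a,b)| ≤ 1 and |u_L(a,b)| ≤ 1 for all a, b, in which no action of the learner is weakly dominated, and let V be its Stackelberg value. Then for every ε > 0 there exist a mixed strategy α* ∈ Δ(A) and a constant c ≥ 0 such that for every horizon T ≥ 1 and every sequence p_1, …, p_T ∈ Δ(B) of mixed plays of the learner, letting R = max_{b' ∈ B} (T·u_L(α*, b') − Σ_{t=1}^T u_L(α*, p_t)) be the learner's regret when the optimizer plays α* every round, the optimizer's total utility satisfies Σ_{t=1}^T u_O(α*, p_t) ≥ (V − ε)·T − c·R. -/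
/-! Let `(α₀, b₀)` attain the Stackelberg value. Since `b₀` is not weakly dominated, separating the
mixtures of the other actions from the payoff vectors dominating `b₀` gives a strategy `α₁` to
which `b₀` is the strict best response. The optimizer plays `α = (1 - l) α₀ + l α₁` with
`l ≤ ε / 2`: this costs at most `ε` against `b₀`, and makes `b₀` a strict best response with some
margin `δ`. Every unit of probability the learner moves away from `b₀` then costs the learner at
least `δ` and gains the optimizer at most `2`, so summing over the rounds gives the bound with
`c = 2 / δ`. -/

open Finset

/-- The set of optimizer utilities `u_O(α, b)` over pairs where `b` is a best
response to `α`; the Stackelberg value is its greatest element. -/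
def StackSet {A B : Type*} [Fintype A] [Fintype B] (uO uL : A → B → ℝ) : Set ℝ :=
  {v | ∃ (α : A → ℝ) (b : B), IsDist α ∧
    (∀ b' : B, ∑ a, α a * uL a b' ≤ ∑ a, α a * uL a b) ∧
    v = ∑ a, α a * uO a b}

open Matrix

section Simplex

variable {X : Type*} [Fintype X]

theorem isDist_iff_mem_stdSimplex {f : X → ℝ} : IsDist f ↔ f ∈ stdSimplex ℝ X := Iff.rfl

theorem inv_sum_smul_mem_stdSimplex {w : X → ℝ} (hw : 0 ≤ w) (hN : 0 < ∑ x, w x) :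
    (∑ x, w x)⁻¹ • w ∈ stdSimplex ℝ X := by
  refine ⟨fun x => smul_nonneg (inv_nonneg.2 hN.le) (hw x), ?_⟩
  simp only [Pi.smul_apply, smul_eq_mul, ← Finset.mul_sum, inv_mul_cancel₀ hN.ne']

theorem IsDist.abs_vecMul_apply_le_one {Y : Type*} {α : X → ℝ} (hα : IsDist α)
    {u : Matrix X Y ℝ} (hu : ∀ x y, |u x y| ≤ 1) (y : Y) : |(α ᵥ* u) y| ≤ 1 :=
  calc |(α ᵥ* u) y| ≤ ∑ x, |α x * u x y| := Finset.abs_sum_le_sum_abs _ _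
    _ ≤ ∑ x, α x := Finset.sum_le_sum fun x _ => by
        rw [abs_mul, abs_of_nonneg (hα.1 x)]
        exact mul_le_of_le_one_right (hα.1 x) (hu x y)
    _ = 1 := hα.2

end Simplex

theorem LinearMap.nonneg_of_forall_lt_map_add_smul {E : Type*} [AddCommGroup E] [Module ℝ E]
    (f : E →ₗ[ℝ] ℝ) {x y : E} {v : ℝ} (h : ∀ t : ℝ, 0 ≤ t → v < f (y + t • x)) : 0 ≤ f x := by
  by_contra! hx
  have hy : v < f y := by simpa using h 0 le_rfl
  have hv := h ((f y - v) / -f x) (div_nonneg (by linarith) (by linarith))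
  have hcancel : (f y - v) / -f x * f x = v - f y := by field_simp [hx.ne]; ring
  rw [map_add, map_smul, smul_eq_mul, hcancel] at hv
  linarith

theorem exists_nonneg_weights_separating {ι : Type*} [Fintype ι] {K : Set (ι → ℝ)}
    (hKconv : Convex ℝ K) (hKcomp : IsCompact K) (y : ι → ℝ) (hK : ∀ x ∈ K, ¬ y ≤ x) :
    ∃ w : ι → ℝ, 0 ≤ w ∧ ∃ d > 0, ∀ x ∈ K, w ⬝ᵥ x + d < w ⬝ᵥ y := by
  classical
  obtain ⟨f, u, v, hfK, huv, hfy⟩ := geometric_hahn_banach_compact_closed hKconv hKcomp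
    (convex_Ici y) isClosed_Ici (Set.disjoint_left.2 hK)
  set w : ι → ℝ := fun i => f (Pi.single i 1)
  have hf : ∀ x, f x = w ⬝ᵥ x := fun x => by
    have := (f : (ι → ℝ) →ₗ[ℝ] ℝ).pi_apply_eq_sum_univ x
    rw [ContinuousLinearMap.coe_coe] at this
    rw [this, dotProduct]
    refine Finset.sum_congr rfl fun i _ => ?_
    rw [smul_eq_mul, mul_comm]
    congr 2
    ext j
    simp [Pi.single_apply, eq_comm]
  refine ⟨w, fun i => ?_, v - u, sub_pos.2 huv, fun x hx => ?_⟩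
  · refine (f : (ι → ℝ) →ₗ[ℝ] ℝ).nonneg_of_forall_lt_map_add_smul (y := y) fun t ht => hfy _ ?_
    have hi : (0 : ι → ℝ) ≤ Pi.single i 1 := Pi.single_nonneg.2 zero_le_one
    exact le_add_of_nonneg_right (smul_nonneg ht hi)
  · have hx := hfK x hx
    have hy := hfy y Set.self_mem_Ici
    rw [hf] at hx hy
    linarith

section Game

variable {A B : Type*} [Fintype A] [Fintype B]

def WeaklyDominated (u : Matrix A B ℝ) (b : B) : Prop :=
  ∃ β : B → ℝ, IsDist β ∧ β b = 0 ∧ ∀ a, u a b ≤ ∑ b', β b' * u a b'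

theorem exists_nonneg_strict_bestResponse {uL : Matrix A B ℝ} {b₀ : B}
    (hnd : ¬ WeaklyDominated uL b₀) :
    ∃ w : A → ℝ, 0 ≤ w ∧ ∃ d > 0, ∀ b ≠ b₀, (w ᵥ* uL) b + d < (w ᵥ* uL) b₀ := by
  classical
  set K : Set (B → ℝ) := stdSimplex ℝ B ∩ {β | β b₀ = 0}
  have hKconv : Convex ℝ K :=
    (convex_stdSimplex ℝ B).inter (convex_hyperplane (LinearMap.proj b₀).isLinear 0)
  have hKcomp : IsCompact K :=
    (isCompact_stdSimplex ℝ B).inter_right (isClosed_eq (continuous_apply b₀) continuous_const)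
  -- `β ᵥ* uLᵀ` is the vector `a ↦ u_L(a, β)`, and `uLᵀ b₀` is `a ↦ u_L(a, b₀)`.
  have hK : ∀ x ∈ uLᵀ.vecMulLinear '' K, ¬ uLᵀ b₀ ≤ x := by
    rintro _ ⟨β, ⟨hβ, hβ₀⟩, rfl⟩ hle
    exact hnd ⟨β, hβ, hβ₀, hle⟩
  obtain ⟨w, hw, d, hd, hsep⟩ := exists_nonneg_weights_separating
    (hKconv.linear_image uLᵀ.vecMulLinear)
    (hKcomp.image uLᵀ.vecMulLinear.continuous_of_finiteDimensional) (uLᵀ b₀) hK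
  refine ⟨w, hw, d, hd, fun b hb => hsep _ ⟨Pi.single b 1, ⟨single_mem_stdSimplex ℝ b, ?_⟩, ?_⟩⟩
  · simp [hb.symm]
  · ext a
    simp

theorem exists_isDist_strict_bestResponse [Nonempty A] {uL : Matrix A B ℝ} {b₀ : B}
    (hnd : ¬ WeaklyDominated uL b₀) :
    ∃ α : A → ℝ, IsDist α ∧ ∃ δ > 0, ∀ b ≠ b₀, (α ᵥ* uL) b + δ ≤ (α ᵥ* uL) b₀ := by
  classical
  by_cases hB : ∃ b₁, b₁ ≠ b₀
  swap
  · exact ⟨Pi.single (Classical.arbitrary A) 1,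
      isDist_iff_mem_stdSimplex.2 (single_mem_stdSimplex ℝ _), 1, one_pos,
      fun b hb => absurd ⟨b, hb⟩ hB⟩
  obtain ⟨b₁, hb₁⟩ := hB
  obtain ⟨w, hw, d, hd, hgap⟩ := exists_nonneg_strict_bestResponse hnd
  set N := ∑ a, w a
  have hN : 0 < N := by
    refine (Finset.sum_nonneg fun a _ => hw a).lt_of_ne fun hN0 => ?_
    have hw0 : w = 0 := funext fun a => (Finset.sum_eq_zero_iff_of_nonneg fun a _ => hw a).1
      hN0.symm a (Finset.mem_univ a)
    have := hgap b₁ hb₁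
    simp [hw0] at this
    linarith
  refine ⟨N⁻¹ • w, isDist_iff_mem_stdSimplex.2 (inv_sum_smul_mem_stdSimplex hw hN), N⁻¹ * d,
    by positivity, fun b hb => ?_⟩
  have := mul_le_mul_of_nonneg_left (hgap b hb).le (inv_nonneg.2 hN.le)
  simp only [smul_vecMul, Pi.smul_apply, smul_eq_mul]
  linarith

theorem exists_isDist_strict_bestResponse_near [Nonempty A] {uO uL : Matrix A B ℝ}
    (hO : ∀ a b, |uO a b| ≤ 1) {α₀ : A → ℝ} {b₀ : B} (hα₀ : IsDist α₀)
    (hbr : ∀ b, (α₀ ᵥ* uL) b ≤ (α₀ ᵥ* uL) b₀) (hnd : ¬ WeaklyDominated uL b₀)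
    {ε : ℝ} (hε : 0 < ε) :
    ∃ α : A → ℝ, IsDist α ∧ (α₀ ᵥ* uO) b₀ - ε ≤ (α ᵥ* uO) b₀ ∧
      ∃ δ > 0, ∀ b ≠ b₀, (α ᵥ* uL) b + δ ≤ (α ᵥ* uL) b₀ := by
  obtain ⟨α₁, hα₁, δ, hδ, hgap⟩ := exists_isDist_strict_bestResponse hnd
  set l := min (ε / 2) 1
  have hl₀ : 0 < l := lt_min (half_pos hε) one_pos
  have hl₁ : l ≤ 1 := min_le_right _ _
  have hlε : l ≤ ε / 2 := min_le_left _ _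
  have hmix : ∀ (u : Matrix A B ℝ) b,
      (((1 - l) • α₀ + l • α₁) ᵥ* u) b = (1 - l) * (α₀ ᵥ* u) b + l * (α₁ ᵥ* u) b := fun u b => by
    simp only [add_vecMul, smul_vecMul, Pi.add_apply, Pi.smul_apply, smul_eq_mul]
  refine ⟨(1 - l) • α₀ + l • α₁,
    isDist_iff_mem_stdSimplex.2 <|
      convex_stdSimplex ℝ A hα₀ hα₁ (sub_nonneg.2 hl₁) hl₀.le (sub_add_cancel 1 l), ?_,
    l * δ, mul_pos hl₀ hδ, fun b hb => ?_⟩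
  · have h₀ := abs_le.1 (hα₀.abs_vecMul_apply_le_one hO b₀)
    have h₁ := abs_le.1 (hα₁.abs_vecMul_apply_le_one hO b₀)
    rw [hmix]
    nlinarith
  · have h₀ := mul_le_mul_of_nonneg_left (hbr b) (sub_nonneg.2 hl₁)
    have h₁ := mul_le_mul_of_nonneg_left (hgap b hb) hl₀.le
    rw [hmix, hmix]
    linarith

end Game

theorem le_sub_mul_of_strict_margin {B : Type*} {g h : B → ℝ} (hg : ∀ b, |g b| ≤ 1) {b₀ : B}
    {δ : ℝ} (hδ : 0 < δ) (hgap : ∀ b ≠ b₀, h b + δ ≤ h b₀) (b : B) :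
    g b₀ - 2 / δ * (h b₀ - h b) ≤ g b := by
  rcases eq_or_ne b b₀ with rfl | hb
  · simp
  have hcost : 2 ≤ 2 / δ * (h b₀ - h b) := by
    calc (2 : ℝ) = 2 / δ * δ := (div_mul_cancel₀ 2 hδ.ne').symm
      _ ≤ 2 / δ * (h b₀ - h b) := by gcongr; linarith [hgap b hb]
  linarith [abs_le.1 (hg b₀), abs_le.1 (hg b)]

theorem le_sum_dotProduct_of_forall_le {ι B : Type*} [Fintype ι] [Fintype B] {g h : B → ℝ}
    {b₀ : B} {v c : ℝ} (hgh : ∀ b, v - c * (h b₀ - h b) ≤ g b) {p : ι → B → ℝ}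
    (hp : ∀ t, IsDist (p t)) :
    Fintype.card ι * v - c * (Fintype.card ι * h b₀ - ∑ t, p t ⬝ᵥ h) ≤ ∑ t, p t ⬝ᵥ g := by
  have hstep : ∀ t, v - c * (h b₀ - p t ⬝ᵥ h) ≤ p t ⬝ᵥ g := fun t =>
    calc v - c * (h b₀ - p t ⬝ᵥ h)
        = (∑ b, p t b) * (v - c * h b₀) + c * ∑ b, p t b * h b := by
          rw [(hp t).2, dotProduct]
          ring
      _ = ∑ b, p t b * (v - c * (h b₀ - h b)) := by
          rw [Finset.sum_mul, Finset.mul_sum, ← Finset.sum_add_distrib]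
          exact Finset.sum_congr rfl fun b _ => by ring
      _ ≤ p t ⬝ᵥ g :=
          Finset.sum_le_sum fun b _ => mul_le_mul_of_nonneg_left (hgh b) ((hp t).1 b)
  calc Fintype.card ι * v - c * (Fintype.card ι * h b₀ - ∑ t, p t ⬝ᵥ h)
      = ∑ t, (v - c * (h b₀ - p t ⬝ᵥ h)) := by
        simp only [Finset.sum_sub_distrib, ← Finset.mul_sum, Finset.sum_const, Finset.card_univ,
          nsmul_eq_mul]
    _ ≤ ∑ t, p t ⬝ᵥ g := Finset.sum_le_sum fun t _ => hstep t

theorem stmt2_general {A B : Type*} [Fintype A] [Fintype B] [Nonempty A] [Nonempty B]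
    (uO uL : A → B → ℝ) (hO : ∀ a b, |uO a b| ≤ 1)
    (hnd : ∀ b : B, ¬ ∃ β : B → ℝ, IsDist β ∧ β b = 0 ∧
      ∀ a : A, uL a b ≤ ∑ b', β b' * uL a b')
    (V : ℝ) (hV : IsGreatest (StackSet uO uL) V)
    (ε : ℝ) (hε : 0 < ε) :
    ∃ (α : A → ℝ) (c : ℝ), IsDist α ∧ 0 ≤ c ∧
      ∀ (T : ℕ), 1 ≤ T → ∀ p : Fin T → B → ℝ, (∀ t, IsDist (p t)) →
        ∑ t : Fin T, ∑ b', p t b' * ∑ a, α a * uO a b'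
          ≥ (V - ε) * T - c * (univ.sup' univ_nonempty fun b' : B =>
              (T : ℝ) * (∑ a, α a * uL a b')
                - ∑ t : Fin T, ∑ b'', p t b'' * ∑ a, α a * uL a b'') := by
  obtain ⟨α₀, b₀, hα₀, hbr, rfl⟩ := hV.1
  obtain ⟨α, hα, hval, δ, hδ, hgap⟩ :=
    exists_isDist_strict_bestResponse_near hO hα₀ hbr (hnd b₀) hε
  have hc : 0 ≤ 2 / δ := by positivity
  refine ⟨α, 2 / δ, hα, hc, fun T _ p hp => ?_⟩
  set regret : B → ℝ := fun b => T * (α ᵥ* uL) b - ∑ t, p t ⬝ᵥ (α ᵥ* uL)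
  show ∑ t, p t ⬝ᵥ (α ᵥ* uO) ≥ ((α₀ ᵥ* uO) b₀ - ε) * T - 2 / δ * univ.sup' univ_nonempty regret
  have hsum := le_sum_dotProduct_of_forall_le
    (le_sub_mul_of_strict_margin (hα.abs_vecMul_apply_le_one hO) hδ hgap) hp
  rw [Fintype.card_fin] at hsum
  have hR : regret b₀ ≤ univ.sup' univ_nonempty regret := le_sup' regret (mem_univ b₀)
  have hcR := mul_le_mul_of_nonneg_left hR hc
  have hvalT := mul_le_mul_of_nonneg_right hval (Nat.cast_nonneg (α := ℝ) T)
  linarith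

/-- Theorem 1: if no learner action is weakly dominated, then for every `ε > 0`
there is a fixed mixed strategy `α*` and a constant `c ≥ 0` such that against
any sequence of mixed plays with regret `R`, the optimizer's total utility is
at least `(V − ε)·T − c·R`, where `V` is the Stackelberg value. -/
theorem stmt2 {A B : Type*} [Fintype A] [Fintype B] [Nonempty A] [Nonempty B]
    (uO uL : A → B → ℝ) (hO : ∀ a b, |uO a b| ≤ 1) (hL : ∀ a b, |uL a b| ≤ 1)
    (hnd : ∀ b : B, ¬ ∃ β : B → ℝ, IsDist β ∧ β b = 0 ∧
      ∀ a : A, uL a b ≤ ∑ b', β b' * uL a b')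
    (V : ℝ) (hV : IsGreatest (StackSet uO uL) V)
    (ε : ℝ) (hε : 0 < ε) :
    ∃ (α : A → ℝ) (c : ℝ), IsDist α ∧ 0 ≤ c ∧
      ∀ (T : ℕ), 1 ≤ T → ∀ p : Fin T → B → ℝ, (∀ t, IsDist (p t)) →
        ∑ t : Fin T, ∑ b', p t b' * ∑ a, α a * uO a b'
          ≥ (V - ε) * T - c * (univ.sup' univ_nonempty fun b' : B =>
              (T : ℝ) * (∑ a, α a * uL a b')
                - ∑ t : Fin T, ∑ b'', p t b'' * ∑ a, α a * uL a b'') :=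
  stmt2_general uO uL hO hnd V hV ε hε
end

section
/- Let (A, B, u_O, u_L) be a finite two-player bimatrix game that is constant-sum, i.e. u_O(a,b) + u_L(a,b) = C for a fixed constant C and all a ∈ A, b ∈ B. Then the Stackelberg value V of the game equals the maximin value: V = max_{α ∈ Δ(A)} min_{b ∈ B} u_O(α, b). -/
open Finset

/-- In a constant-sum game, the Stackelberg value equals the maximin value
`max_{α ∈ Δ(A)} min_{b ∈ B} u_O(α, b)`. -/
theorem stmt3 {A B : Type*} [Fintype A] [Fintype B] [Nonempty A] [Nonempty B]
    (uO uL : A → B → ℝ) (C : ℝ) (hC : ∀ a b, uO a b + uL a b = C)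
    (V : ℝ) (hV : IsGreatest (StackSet uO uL) V) :
    IsGreatest {w : ℝ | ∃ α : A → ℝ, IsDist α ∧
      w = univ.inf' univ_nonempty (fun b : B => ∑ a, α a * uO a b)} V := by
  have key : ∀ (α : A → ℝ), IsDist α → ∀ b,
      ∑ a, α a * uL a b = C - ∑ a, α a * uO a b := by
    intro α hα b
    have h1 : ∀ a ∈ univ, α a * uL a b = α a * C - α a * uO a b := by
      intro a _
      have h := hC a b
      have : uL a b = C - uO a b := by linarith
      rw [this]; ring
    rw [Finset.sum_congr rfl h1, Finset.sum_sub_distrib, ← Finset.sum_mul, hα.2, one_mul]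
  have hset : StackSet uO uL = {w : ℝ | ∃ α : A → ℝ, IsDist α ∧
      w = univ.inf' univ_nonempty (fun b : B => ∑ a, α a * uO a b)} := by
    ext v
    constructor
    · rintro ⟨α, b, hα, hbr, rfl⟩
      refine ⟨α, hα, ?_⟩
      refine le_antisymm ?_ (Finset.inf'_le _ (mem_univ b))
      apply Finset.le_inf'
      intro b' _
      have := hbr b'
      rw [key α hα b', key α hα b] at this
      linarith
    · rintro ⟨α, hα, rfl⟩
      obtain ⟨b, _, hb⟩ := Finset.exists_mem_eq_inf' univ_nonempty
        (fun b : B => ∑ a, α a * uO a b)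
      refine ⟨α, b, hα, ?_, hb⟩
      intro b'
      rw [key α hα b', key α hα b]
      have h2 := Finset.inf'_le (fun b : B => ∑ a, α a * uO a b) (mem_univ b')
      rw [hb] at h2
      linarith
  rw [← hset]; exact hV
end

section
/- (Theorem 2) Let (A, B, u_O, u_L) be a finite two-player bimatrix game that is constant-sum, i.e. u_O(a,b) + u_L(a,b) = C for a fixed constant C and all a ∈ A, b ∈ B, and let V be its Stackelberg value. Let T ≥ 1, let a^1, …, a^T ∈ A be any sequence of optimizer actions, and let p_1, …, p_T ∈ Δ(B) be any sequence of mixed plays of the learner. Set R = max_{b ∈ B} Σ_{t=1}^T u_L(a^t, b) − Σ_{t=1}^T u_L(a^t, p_t) (the learner's regret). Then the optimizer's total utility satisfies Σ_{t=1}^T u_O(a^t, p_t) ≤ V·T + R. -/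
/-!
Let `α` be the empirical distribution of the optimizer's actions and `b` a learner action that is
best in hindsight. Then `b` is a best response to `α`, so `T · u_O(α, b) ≤ V · T`. In a
constant-sum game `T · u_O(α, b) = T·C − max_b Σₜ u_L(aᵗ, b)`, while the optimizer's realized
utility is `T·C − Σₜ u_L(aᵗ, pₜ)`; the difference of the two is exactly the regret `R`.
-/

open Finset

theorem IsDist.sum_mul_eq_sub {X : Type*} [Fintype X] {p : X → ℝ} (hp : IsDist p)
    {f g : X → ℝ} {C : ℝ} (hfg : ∀ x, f x + g x = C) :
    ∑ x, p x * f x = C - ∑ x, p x * g x := by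
  rw [eq_sub_iff_add_eq, ← sum_add_distrib]
  simp_rw [← mul_add, hfg, ← sum_mul, hp.2, one_mul]

section Empirical

variable {A : Type*} [Fintype A] [DecidableEq A] {T : ℕ}

noncomputable def empiricalDist (a : Fin T → A) (x : A) : ℝ :=
  (#{t | a t = x} : ℝ) / T

theorem sum_empiricalDist_mul (a : Fin T → A) (f : A → ℝ) :
    ∑ x, empiricalDist a x * f x = (∑ t, f (a t)) / T := by
  rw [← sum_fiberwise univ a (fun t => f (a t)), sum_div]
  refine sum_congr rfl fun x _ => ?_
  rw [sum_congr rfl fun t ht => by rw [(mem_filter.1 ht).2], sum_const, nsmul_eq_mul,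
    empiricalDist, div_mul_eq_mul_div]

theorem isDist_empiricalDist (hT : 0 < T) (a : Fin T → A) : IsDist (empiricalDist a) := by
  refine ⟨fun x => by unfold empiricalDist; positivity, ?_⟩
  simpa [hT.ne'] using sum_empiricalDist_mul a 1

end Empirical

theorem sum_le_mul_of_mem_upperBounds_stackSet {A B : Type*} [Fintype A] [Fintype B]
    {uO uL : A → B → ℝ} {V : ℝ} (hV : V ∈ upperBounds (StackSet uO uL))
    {T : ℕ} (hT : 0 < T) (a : Fin T → A) {b : B}
    (hb : ∀ b', ∑ t, uL (a t) b' ≤ ∑ t, uL (a t) b) :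
    ∑ t, uO (a t) b ≤ V * T := by
  classical
  have hT' : (0 : ℝ) < T := Nat.cast_pos.2 hT
  have hbest : ∀ b', ∑ x, empiricalDist a x * uL x b' ≤ ∑ x, empiricalDist a x * uL x b := by
    intro b'
    simp only [sum_empiricalDist_mul]
    exact div_le_div_of_nonneg_right (hb b') hT'.le
  have := hV ⟨_, b, isDist_empiricalDist hT a, hbest, rfl⟩
  rwa [sum_empiricalDist_mul, div_le_iff₀ hT'] at this

theorem stmt4_general {A B : Type*} [Fintype A] [Fintype B] [Nonempty B]
    (uO uL : A → B → ℝ) (C : ℝ) (hC : ∀ a b, uO a b + uL a b = C)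
    (V : ℝ) (hV : IsGreatest (StackSet uO uL) V)
    (T : ℕ) (hT : 1 ≤ T) (a : Fin T → A)
    (p : Fin T → B → ℝ) (hp : ∀ t, IsDist (p t))
    (R : ℝ)
    (hR : R = (univ.sup' univ_nonempty fun b : B => ∑ t : Fin T, uL (a t) b)
          - ∑ t : Fin T, ∑ b, p t b * uL (a t) b) :
    ∑ t : Fin T, ∑ b, p t b * uO (a t) b ≤ V * T + R := by
  obtain ⟨b, -, hb⟩ := exists_mem_eq_sup' univ_nonempty fun b : B => ∑ t : Fin T, uL (a t) b
  have hbest : ∀ b', ∑ t, uL (a t) b' ≤ ∑ t, uL (a t) b := fun b' =>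
    hb ▸ le_sup' (fun b : B => ∑ t : Fin T, uL (a t) b) (mem_univ b')
  have hStackelberg := sum_le_mul_of_mem_upperBounds_stackSet hV.2 hT a hbest
  have hconst : ∑ t, (uO (a t) b + uL (a t) b) = T * C := by simp [hC]
  rw [hR, hb, sum_congr rfl fun t _ => (hp t).sum_mul_eq_sub (hC (a t)), sum_sub_distrib,
    sum_const, card_univ, Fintype.card_fin, nsmul_eq_mul]
  rw [sum_add_distrib] at hconst
  linarith

/-- Theorem 2: in a constant-sum game with Stackelberg value `V`, against a
learner whose plays have regret `R` the optimizer's total utility is at most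
`V·T + R`. -/
theorem stmt4 {A B : Type*} [Fintype A] [Fintype B] [Nonempty A] [Nonempty B]
    (uO uL : A → B → ℝ) (C : ℝ) (hC : ∀ a b, uO a b + uL a b = C)
    (V : ℝ) (hV : IsGreatest (StackSet uO uL) V)
    (T : ℕ) (hT : 1 ≤ T) (a : Fin T → A)
    (p : Fin T → B → ℝ) (hp : ∀ t, IsDist (p t))
    (R : ℝ)
    (hR : R = (univ.sup' univ_nonempty fun b : B => ∑ t : Fin T, uL (a t) b)
          - ∑ t : Fin T, ∑ b, p t b * uL (a t) b) :
    ∑ t : Fin T, ∑ b, p t b * uO (a t) b ≤ V * T + R :=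
  stmt4_general uO uL C hC V hV T hT a p hp R hR
end

section
/- (Theorem 3, quantitative form) Let (A, B, u_O, u_L) be a finite two-player bimatrix game with Stackelberg value V. For every ε > 0 there exists δ > 0 such that for every horizon T ≥ 1 and all sequences a^1, …, a^T ∈ A and b^1, …, b^T ∈ B: if the swap regret max_{π : B → B} Σ_{t=1}^T (u_L(a^t, π(b^t)) − u_L(a^t, b^t)) is at most δ·T, then the optimizer's total utility satisfies Σ_{t=1}^T u_O(a^t, b^t) ≤ (V + ε)·T. -/
/-!
Compactness of the simplex makes the defining property of `V` robust: a `δ`-best response `b`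
to `α` gives `u_O(α, b) ≤ V + ε`. As payoffs are bounded, this yields
`u_O(w, y) ≤ (V + ε) ∑ w + K · R` for every nonnegative, unnormalised strategy `w` against which
`y` has regret at most `R`. Take for `w` the counts of the optimizer's actions in the rounds where
the learner played `y`: the regret of `y` against `w` is the swap regret of `π = (y ↦ b')`, at
most `δ T`. Summing over `y` gives `(V + ε/2) T + |B| K δ T`.
-/

open Finset

open Filter Topology

section Game

variable {A B : Type*} [Fintype A] [Fintype B] (uO uL : A → B → ℝ) {V ε : ℝ}

lemma eventually_payoff_le_of_approx_bestResponse (hV : V ∈ upperBounds (StackSet uO uL))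
    (hε : 0 < ε) (b : B) :
    ∀ᶠ δ in 𝓝[>] 0, ∀ α, IsDist α → (∀ b', ∑ a, α a * uL a b' ≤ ∑ a, α a * uL a b + δ) →
      ∑ a, α a * uO a b ≤ V + ε := by
  set K := stdSimplex ℝ A ∩ {α | V + ε ≤ ∑ a, α a * uO a b}
  have hK : IsCompact K :=
    (isCompact_stdSimplex ℝ A).inter_right (isClosed_le continuous_const (by fun_prop))
  rcases K.eq_empty_or_nonempty with hKe | hKne
  · refine Eventually.of_forall fun δ α hα _ => ?_
    by_contra h
    exact hKe.subset ⟨hα, (not_le.mp h).le⟩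
  let regret : (A → ℝ) → ℝ := fun α =>
    univ.sup' ⟨b, mem_univ b⟩ fun b' => ∑ a, α a * uL a b' - ∑ a, α a * uL a b
  have hcont : Continuous regret := Continuous.finset_sup'_apply _ fun _ _ => by fun_prop
  obtain ⟨α₀, ⟨hα₀, hα₀_payoff⟩, hmin⟩ := hK.exists_isMinOn hKne hcont.continuousOn
  have hpos : 0 < regret α₀ := by
    by_contra! h
    have hbr : ∀ b', ∑ a, α₀ a * uL a b' ≤ ∑ a, α₀ a * uL a b := fun b' => by
      linarith [(Finset.sup'_le_iff _ _).mp h b' (mem_univ b')]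
    linarith [hV ⟨α₀, b, hα₀, hbr, rfl⟩, hα₀_payoff.out]
  filter_upwards [Ioo_mem_nhdsGT hpos] with δ hδ α hα hbr
  by_contra h
  have : regret α ≤ δ := Finset.sup'_le _ _ fun b' _ => by linarith [hbr b']
  linarith [isMinOn_iff.mp hmin α ⟨hα, (not_le.mp h).le⟩, hδ.2]

lemma exists_payoff_le_of_approx_bestResponse (hV : V ∈ upperBounds (StackSet uO uL))
    (hε : 0 < ε) :
    ∃ δ > 0, ∀ α b, IsDist α → (∀ b', ∑ a, α a * uL a b' ≤ ∑ a, α a * uL a b + δ) →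
      ∑ a, α a * uO a b ≤ V + ε :=
  ((eventually_all.2 (eventually_payoff_le_of_approx_bestResponse uO uL hV hε)).and
    self_mem_nhdsWithin).exists.imp fun _ h => ⟨h.2, fun α b => h.1 b α⟩

lemma sum_div_sum_mul {w : A → ℝ} (k : A → ℝ) :
    ∑ x, (w x / ∑ x', w x') * k x = (∑ x, w x * k x) / ∑ x, w x := by
  rw [sum_div]
  exact sum_congr rfl fun x _ => div_mul_eq_mul_div _ _ _

lemma isDist_div_sum_s6 {w : A → ℝ} (hw : ∀ x, 0 ≤ w x) (hW : 0 < ∑ x, w x) :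
    IsDist fun x => w x / ∑ x', w x' :=
  ⟨fun x => div_nonneg (hw x) hW.le, by rw [← sum_div, div_self hW.ne']⟩

/-- A `δ`-best response costs nothing beyond `ε`; a worse one costs at most the bounded excess
payoff, which the regret `R ≥ δ ∑ w` pays for at the rate `K`. -/
lemma exists_weighted_payoff_le (hV : V ∈ upperBounds (StackSet uO uL)) (hε : 0 < ε) :
    ∃ K, 0 ≤ K ∧ ∀ w : A → ℝ, (∀ x, 0 ≤ w x) → ∀ y R,
      (∀ b', ∑ x, w x * (uL x b' - uL x y) ≤ R) →
      ∑ x, w x * uO x y ≤ (V + ε) * ∑ x, w x + K * R := by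
  obtain ⟨δ, hδ, hrobust⟩ := exists_payoff_le_of_approx_bestResponse uO uL hV hε
  obtain ⟨M, hM⟩ := (Set.finite_range (Function.uncurry uO)).bddAbove
  refine ⟨|M - V - ε| / δ, by positivity, fun w hw y R hR => ?_⟩
  have hW : 0 ≤ ∑ x, w x := sum_nonneg fun x _ => hw x
  have hR0 : 0 ≤ R := by simpa using hR y
  rcases lt_or_ge R (δ * ∑ x, w x) with hsmall | hlarge
  · have hWpos : 0 < ∑ x, w x := pos_of_mul_pos_right (hR0.trans_lt hsmall) hδ.le
    have hbr : ∀ b', ∑ x, (w x / ∑ x', w x') * uL x b' ≤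
        ∑ x, (w x / ∑ x', w x') * uL x y + δ := fun b' => by
      rw [sum_div_sum_mul, sum_div_sum_mul, div_add' _ _ _ hWpos.ne',
        div_le_div_iff_of_pos_right hWpos]
      have := hR b'
      simp only [mul_sub, sum_sub_distrib] at this
      linarith
    have := hrobust _ y (isDist_div_sum_s6 hw hWpos) hbr
    rw [sum_div_sum_mul, div_le_iff₀ hWpos] at this
    linarith [mul_nonneg (div_nonneg (abs_nonneg (M - V - ε)) hδ.le) hR0]
  · calc ∑ x, w x * uO x y ≤ ∑ x, w x * M :=
          sum_le_sum fun x _ => mul_le_mul_of_nonneg_left (hM ⟨(x, y), rfl⟩) (hw x)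
      _ = (V + ε) * ∑ x, w x + (M - V - ε) * ∑ x, w x := by rw [← sum_mul]; ring
      _ ≤ (V + ε) * ∑ x, w x + |M - V - ε| * (R / δ) := by
        gcongr
        · exact le_abs_self _
        · rwa [le_div_iff₀ hδ, mul_comm]
      _ = (V + ε) * ∑ x, w x + |M - V - ε| / δ * R := by ring

end Game

section Empirical

variable {ι A B : Type*} [Fintype ι] [Fintype A] [DecidableEq A] [DecidableEq B]
  (a : ι → A) (b : ι → B)

def jointCount (y : B) (x : A) : ℝ := #{t | b t = y ∧ a t = x}

lemma sum_jointCount_mul (y : B) (f : A → ℝ) :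
    ∑ x, jointCount a b y x * f x = ∑ t with b t = y, f (a t) := by
  rw [← sum_fiberwise {t | b t = y} a]
  refine sum_congr rfl fun x _ => ?_
  rw [filter_filter, sum_congr rfl fun t ht => by rw [(mem_filter.mp ht).2.2], sum_const,
    nsmul_eq_mul, jointCount]

lemma sum_sum_jointCount_mul [Fintype B] (f : A → B → ℝ) :
    ∑ y, ∑ x, jointCount a b y x * f x y = ∑ t, f (a t) (b t) := by
  simp_rw [sum_jointCount_mul]
  rw [← sum_fiberwise univ b]
  exact sum_congr rfl fun y _ => sum_congr rfl fun t ht => by rw [(mem_filter.mp ht).2]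

lemma sum_sub_update_eq_sum_jointCount_mul (u : A → B → ℝ) (y b' : B) :
    ∑ t, (u (a t) (Function.update id y b' (b t)) - u (a t) (b t)) =
      ∑ x, jointCount a b y x * (u x b' - u x y) := by
  rw [sum_jointCount_mul, sum_filter]
  refine sum_congr rfl fun t _ => ?_
  by_cases h : b t = y <;> simp [h]

end Empirical

theorem stmt6_general {A B : Type*} [Fintype A] [Fintype B]
    (uO uL : A → B → ℝ)
    (V : ℝ) (hV : IsGreatest (StackSet uO uL) V) :
    ∀ ε : ℝ, 0 < ε → ∃ δ : ℝ, 0 < δ ∧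
      ∀ (T : ℕ), 1 ≤ T → ∀ (a : Fin T → A) (b : Fin T → B),
        (∀ π : B → B, ∑ t : Fin T, (uL (a t) (π (b t)) - uL (a t) (b t)) ≤ δ * T) →
        ∑ t : Fin T, uO (a t) (b t) ≤ (V + ε) * T := by
  classical
  intro ε hε
  obtain ⟨K, hK, hpayoff⟩ := exists_weighted_payoff_le uO uL hV.2 (half_pos hε)
  set n : ℝ := (Fintype.card B : ℝ)
  refine ⟨ε / (2 * (n * K + 1)), by positivity, fun T _ a b hswap => ?_⟩
  have hcount : ∀ y, ∑ x, jointCount a b y x * uO x y ≤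
      (V + ε / 2) * ∑ x, jointCount a b y x + K * (ε / (2 * (n * K + 1)) * T) :=
    fun y => hpayoff (jointCount a b y) (fun x => Nat.cast_nonneg _) y _ fun b' => by
      rw [← sum_sub_update_eq_sum_jointCount_mul]
      exact hswap _
  have htotal : ∑ y, ∑ x, jointCount a b y x = T := by
    simpa using sum_sum_jointCount_mul a b fun _ _ => (1 : ℝ)
  have hsmall : n * K * (ε / (2 * (n * K + 1))) ≤ ε / 2 := by
    rw [mul_div_assoc', div_le_div_iff₀ (by positivity) two_pos]
    linarith
  calc ∑ t, uO (a t) (b t) = ∑ y, ∑ x, jointCount a b y x * uO x y :=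
        (sum_sum_jointCount_mul a b uO).symm
    _ ≤ ∑ y, ((V + ε / 2) * ∑ x, jointCount a b y x + K * (ε / (2 * (n * K + 1)) * T)) :=
        sum_le_sum fun y _ => hcount y
    _ = (V + ε / 2) * T + n * K * (ε / (2 * (n * K + 1))) * T := by
        rw [sum_add_distrib, ← mul_sum, htotal, sum_const, card_univ, nsmul_eq_mul]
        ring
    _ ≤ (V + ε) * T := by
        linarith [mul_le_mul_of_nonneg_right hsmall (Nat.cast_nonneg (α := ℝ) T)]

/-- Theorem 3 (quantitative form): for every `ε > 0` there is `δ > 0` such that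
whenever the learner's swap regret is at most `δ·T`, the optimizer's total
utility is at most `(V + ε)·T`, where `V` is the Stackelberg value. -/
theorem stmt6 {A B : Type*} [Fintype A] [Fintype B] [Nonempty A] [Nonempty B]
    (uO uL : A → B → ℝ)
    (V : ℝ) (hV : IsGreatest (StackSet uO uL) V) :
    ∀ ε : ℝ, 0 < ε → ∃ δ : ℝ, 0 < δ ∧
      ∀ (T : ℕ), 1 ≤ T → ∀ (a : Fin T → A) (b : Fin T → B),
        (∀ π : B → B, ∑ t : Fin T, (uL (a t) (π (b t)) - uL (a t) (b t)) ≤ δ * T) →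
        ∑ t : Fin T, uO (a t) (b t) ≤ (V + ε) * T :=
  stmt6_general uO uL V hV
end

section
/- Fix c ∈ [0, 1], and consider the bimatrix game with optimizer actions A = {Top, Bottom} and learner actions B = {Left, Mid, Right}, where the utility pairs (u_O, u_L) are: (Top, Left) = (0, c), (Top, Mid) = (−2, −1), (Top, Right) = (−2, 0), (Bottom, Left) = (0, −1), (Bottom, Mid) = (−2, 1), (Bottom, Right) = (2, 0). Then the Stackelberg value of this game equals 0. -/
open Finset

/-- The optimizer's payoff matrix of the example game: rows are Top, Bottom;
columns are Left, Mid, Right. -/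
def uOEx : Fin 2 → Fin 3 → ℝ := ![![0, -2, -2], ![0, -2, 2]]

/-- The learner's payoff matrix of the example game, with parameter `c` for the
(Top, Left) entry. -/
def uLEx (c : ℝ) : Fin 2 → Fin 3 → ℝ := ![![c, -1, 0], ![-1, 1, 0]]

/-- For every `c ∈ [0, 1]`, the Stackelberg value of the example game is `0`. -/
theorem stmt10 (c : ℝ) (hc0 : 0 ≤ c) (hc1 : c ≤ 1) :
    IsGreatest (StackSet uOEx (uLEx c)) 0 := by
  constructor
  · refine ⟨![1, 0], 0, ⟨?_, ?_⟩, ?_, ?_⟩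
    · intro x; fin_cases x <;> norm_num
    · simp [Fin.sum_univ_two]
    · intro b'; fin_cases b' <;> simp [Fin.sum_univ_two, uLEx] <;> linarith
    · simp [Fin.sum_univ_two, uOEx]
  · rintro v ⟨α, b, ⟨hpos, hsum⟩, hbr, rfl⟩
    have h0 := hpos 0
    have h1 := hpos 1
    rw [Fin.sum_univ_two] at hsum
    fin_cases b
    · simp [Fin.sum_univ_two, uOEx]
    · simp [Fin.sum_univ_two, uOEx]; linarith
    · have := hbr 1
      rw [Fin.sum_univ_two, Fin.sum_univ_two] at this
      simp [uLEx] at this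
      simp [Fin.sum_univ_two, uOEx]
      linarith
end

section
/- (Theorem 6, Part 1; deterministic-rewards form) Let (A, B, u_O, u_L) be a finite two-player bimatrix game with |u_O|, |u_L| ≤ 1 and B = {b_1, …, b_N}. Let π = ((α_1, t_1, j_1), …, (α_k, t_k, j_k)) be a valid strategy for the control problem with all t_i > 0, and assume additionally that every point strictly between P_{i−1} and P_i lies in the interior of the region S_{j_i}, i.e. satisfies x_{j_i} > x_j for all j ≠ j_i. Then for every ε > 0 there exist γ₀ > 0 and T₀ such that for all γ ∈ (0, γ₀) and all T ≥ T₀ the following holds: partition the rounds 1, …, T into k consecutive blocks whose lengths n_i satisfy |n_i − t_i·T| ≤ 1 and Σ n_i = T, let the optimizer play α^t = α_i throughout block i, and define rewards r(b_j, t) = u_L(α^t, b_j). Then every sequence of mixed plays p_1, …, p_T ∈ Δ(B) that is γ-mean-based with respect to these rewards satisfies Σ_{t=1}^T Σ_j p_t(b_j)·u_O(α^t, b_j) ≥ (U(π) − ε)·T. -/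
open Finset

/-- A sequence of mixed plays `p` is `γ`-mean-based with respect to rewards `r`
if whenever the cumulative reward of action `i` before round `t` is less than
that of action `j` minus `γT`, action `i` is played with probability at most
`γ` at round `t`. -/
def MeanBased {B : Type*} [Fintype B] {T : ℕ} (γ : ℝ) (r : B → Fin T → ℝ)
    (p : Fin T → B → ℝ) : Prop :=
  ∀ (t : Fin T) (i j : B),
    (∑ s ∈ univ.filter (fun s : Fin T => s < t), r i s)
      < (∑ s ∈ univ.filter (fun s : Fin T => s < t), r j s) - γ * T →
    p t i ≤ γ

lemma auxA {M : Type*} [AddCommMonoid M] {K : ℕ} (f : Fin K → M) (m : ℕ) :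
    ∑ l ∈ univ.filter (fun l : Fin K => (l : ℕ) < m), f l
      = ∑ u ∈ Finset.range m, (if h : u < K then f ⟨u, h⟩ else 0) := by
  induction m with
  | zero => simp
  | succ m ih =>
    rw [Finset.sum_range_succ, ← ih]
    by_cases h : m < K
    · have hins : univ.filter (fun l : Fin K => (l : ℕ) < m + 1)
          = insert (⟨m, h⟩ : Fin K) (univ.filter (fun l : Fin K => (l : ℕ) < m)) := by
        ext l
        simp only [Finset.mem_filter, Finset.mem_univ, true_and, Finset.mem_insert,
          Fin.ext_iff]
        omega
      rw [hins, Finset.sum_insert (by simp), dif_pos h, add_comm]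
    · rw [dif_neg h, add_zero]
      apply Finset.sum_congr _ (fun _ _ => rfl)
      ext l
      have := l.isLt
      simp only [Finset.mem_filter, Finset.mem_univ, true_and]
      omega

lemma auxA' {M : Type*} [AddCommMonoid M] {K : ℕ} (f : Fin K → M) (t : Fin K) :
    ∑ l ∈ univ.filter (fun l : Fin K => l < t), f l
      = ∑ u ∈ Finset.range (t : ℕ), (if h : u < K then f ⟨u, h⟩ else 0) := by
  rw [← auxA]
  apply Finset.sum_congr _ (fun _ _ => rfl)
  ext l
  simp only [Finset.mem_filter, Finset.mem_univ, true_and, Fin.lt_def]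

lemma auxDist {A : Type*} [Fintype A] {f g : A → ℝ} (hf : IsDist f)
    (hg : ∀ a, |g a| ≤ 1) : |∑ a, f a * g a| ≤ 1 := by
  calc |∑ a, f a * g a| ≤ ∑ a, |f a * g a| := Finset.abs_sum_le_sum_abs _ _
    _ ≤ ∑ a, f a := by
        apply Finset.sum_le_sum
        intro a _
        rw [abs_mul, abs_of_nonneg (hf.1 a)]
        calc f a * |g a| ≤ f a * 1 := mul_le_mul_of_nonneg_left (hg a) (hf.1 a)
          _ = f a := mul_one _
    _ = 1 := hf.2

lemma natCastNonneg (x : ℕ) : (0:ℝ) ≤ (x:ℝ) := Nat.cast_nonneg x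

set_option maxHeartbeats 2000000 in
/-- Theorem 6, Part 1 (deterministic-rewards form).  Given a valid strategy
`π = ((α_1, t_1, j_1), …, (α_k, t_k, j_k))` for the control problem (with the
states `P m = ∑_{l < m} t_l · v(α_l)`, where `v(α)_j = u_L(α, b_j)`), all
`t_i > 0`, and with every point strictly between `P_{i−1}` and `P_i` in the
interior of the region `S_{j_i}`, the time-discretized implementation of `π`
guarantees the optimizer utility at least `(U(π) − ε)·T` against every
`γ`-mean-based learner, for all small enough `γ` and large enough `T`. -/
theorem stmt12 {A : Type*} [Fintype A] [Nonempty A] {N : ℕ} (hN : 0 < N)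
    (uO uL : A → Fin N → ℝ)
    (hO : ∀ a j, |uO a j| ≤ 1) (hL : ∀ a j, |uL a j| ≤ 1)
    (k : ℕ) (α : Fin k → A → ℝ) (tv : Fin k → ℝ) (jv : Fin k → Fin N)
    (hdist : ∀ i, IsDist (α i)) (htpos : ∀ i, 0 < tv i) (htsum : ∑ i, tv i = 1)
    (P : ℕ → Fin N → ℝ)
    (hP : ∀ (m : ℕ) (j : Fin N),
      P m j = ∑ l ∈ univ.filter (fun l : Fin k => (l : ℕ) < m),
        tv l * ∑ a, α l a * uL a j)
    (hvalid : ∀ (i : Fin k) (j : Fin N),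
      P (i : ℕ) j ≤ P (i : ℕ) (jv i) ∧ P ((i : ℕ) + 1) j ≤ P ((i : ℕ) + 1) (jv i))
    (hinterior : ∀ (i : Fin k) (θ : ℝ), 0 < θ → θ < 1 → ∀ j : Fin N, j ≠ jv i →
      (1 - θ) * P (i : ℕ) j + θ * P ((i : ℕ) + 1) j
        < (1 - θ) * P (i : ℕ) (jv i) + θ * P ((i : ℕ) + 1) (jv i))
    (ε : ℝ) (hε : 0 < ε) :
    ∃ γ₀ : ℝ, 0 < γ₀ ∧ ∃ T₀ : ℕ, ∀ γ : ℝ, 0 < γ → γ < γ₀ → ∀ T : ℕ, T₀ ≤ T →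
      ∀ n : Fin k → ℕ,
        (∀ i, |(n i : ℝ) - tv i * T| ≤ 1) → (∑ i, n i = T) →
      ∀ aseq : Fin T → A → ℝ,
        (∀ (t : Fin T) (i : Fin k),
          (∑ l ∈ univ.filter (fun l : Fin k => (l : ℕ) < (i : ℕ)), n l) ≤ (t : ℕ) →
          (t : ℕ) < (∑ l ∈ univ.filter (fun l : Fin k => (l : ℕ) ≤ (i : ℕ)), n l) →
          aseq t = α i) →
      ∀ p : Fin T → Fin N → ℝ, (∀ t, IsDist (p t)) →
        MeanBased γ (fun j t => ∑ a, aseq t a * uL a j) p →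
        ((∑ i, tv i * ∑ a, α i a * uO a (jv i)) - ε) * T
          ≤ ∑ t : Fin T, ∑ j : Fin N, p t j * ∑ a, aseq t a * uO a j := by
  -- basic nonemptiness
  have hk : 0 < k := by
    rcases Nat.eq_zero_or_pos k with hk0 | hk0
    · subst hk0; simp at htsum
    · exact hk0
  haveI : NeZero k := ⟨hk.ne'⟩
  haveI : NeZero N := ⟨hN.ne'⟩
  -- payoff vectors
  set v : Fin k → Fin N → ℝ := fun l j => ∑ a, α l a * uL a j with hvdef
  have hvb : ∀ l j, |v l j| ≤ 1 := fun l j => auxDist (hdist l) (fun a => hL a j)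
  set w : Fin k → ℝ := fun l => ∑ a, α l a * uO a (jv l) with hwdef
  have hwb : ∀ l, |w l| ≤ 1 := fun l => auxDist (hdist l) (fun a => hO a (jv l))
  set δ : ℝ := ε / 12 with hδdef
  have hδ : 0 < δ := by positivity
  -- the minimal gap constant
  set c : ℝ := Finset.inf' (univ : Finset (Fin k × Fin N)) univ_nonempty
      (fun q => if q.2 = jv q.1 then 1 else
        (P (q.1 : ℕ) (jv q.1) - P (q.1 : ℕ) q.2)
          + (P ((q.1 : ℕ) + 1) (jv q.1) - P ((q.1 : ℕ) + 1) q.2)) with hcdef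
  have hc0 : 0 < c := by
    rw [hcdef, Finset.lt_inf'_iff]
    rintro ⟨i, j⟩ -
    dsimp only
    split_ifs with hj
    · norm_num
    · have := hinterior i (1/2) (by norm_num) (by norm_num) j hj
      linarith
  have hcle : ∀ (i : Fin k) (j : Fin N), j ≠ jv i →
      c ≤ (P (i : ℕ) (jv i) - P (i : ℕ) j)
        + (P ((i : ℕ) + 1) (jv i) - P ((i : ℕ) + 1) j) := by
    intro i j hj
    have h := Finset.inf'_le (b := (i, j)) (s := (univ : Finset (Fin k × Fin N)))
      (fun q => if q.2 = jv q.1 then 1 else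
        (P (q.1 : ℕ) (jv q.1) - P (q.1 : ℕ) q.2)
          + (P ((q.1 : ℕ) + 1) (jv q.1) - P ((q.1 : ℕ) + 1) q.2)) (mem_univ _)
    rw [if_neg hj] at h
    exact le_trans (le_of_eq hcdef) h
  set tmin : ℝ := Finset.inf' (univ : Finset (Fin k)) univ_nonempty tv with htmindef
  have htmin0 : 0 < tmin := by
    rw [htmindef, Finset.lt_inf'_iff]
    exact fun i _ => htpos i
  have htminle : ∀ i, tmin ≤ tv i := fun i => Finset.inf'_le _ (mem_univ i)
  clear_value v w δ c tmin
  refine ⟨min (ε / (12 * N)) (δ * c / 2), ?_, ⌈10 * k / ε⌉₊ + ⌈8 * (k + 1) / (δ * c)⌉₊ + ⌈2 / tmin⌉₊, ?_⟩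
  · have hN' : (0:ℝ) < N := by exact_mod_cast hN
    apply lt_min
    · positivity
    · have := mul_pos hδ hc0
      linarith
  intro γ hγ0 hγ1 T hT n hn hnsum aseq haseq p hpdist hmb
  have hγa : γ < ε / (12 * N) := lt_of_lt_of_le hγ1 (min_le_left _ _)
  have hγb : γ < δ * c / 2 := lt_of_lt_of_le hγ1 (min_le_right _ _)
  have hTcast : ((⌈10 * k / ε⌉₊ + ⌈8 * (k + 1) / (δ * c)⌉₊ + ⌈2 / tmin⌉₊ : ℕ) : ℝ) ≤ T := by
    exact_mod_cast hT
  have hTr1 : 10 * k / ε ≤ (T : ℝ) := by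
    refine le_trans (Nat.le_ceil _) (le_trans ?_ hTcast)
    push_cast; linarith [natCastNonneg ⌈8 * (k + 1) / (δ * c)⌉₊,
      natCastNonneg ⌈2 / tmin⌉₊]
  have hTr2 : 8 * (k + 1) / (δ * c) ≤ (T : ℝ) := by
    refine le_trans (Nat.le_ceil _) (le_trans ?_ hTcast)
    push_cast; linarith [natCastNonneg ⌈10 * k / ε⌉₊,
      natCastNonneg ⌈2 / tmin⌉₊]
  have hTr3 : 2 / tmin ≤ (T : ℝ) := by
    refine le_trans (Nat.le_ceil _) (le_trans ?_ hTcast)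
    push_cast; linarith [natCastNonneg ⌈10 * k / ε⌉₊,
      natCastNonneg ⌈8 * (k + 1) / (δ * c)⌉₊]
  have hT0 : (0:ℝ) < T := lt_of_lt_of_le (div_pos (by positivity) (mul_pos hδ hc0)) hTr2
  -- block boundaries
  set nn : ℕ → ℕ := fun u => if h : u < k then n ⟨u, h⟩ else 0 with hnndef
  set sb : ℕ → ℕ := fun m => ∑ u ∈ Finset.range m, nn u with hsbdef
  clear_value nn
  have hsbsucc : ∀ m, sb (m + 1) = sb m + nn m := by
    intro m; simp only [hsbdef]; exact Finset.sum_range_succ _ _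
  have hsbmono : Monotone sb := by
    intro a b hab
    simp only [hsbdef]
    exact Finset.sum_le_sum_of_subset (Finset.range_subset_range.2 hab)
  have hsf : ∀ m : ℕ, (∑ l ∈ univ.filter (fun l : Fin k => (l : ℕ) < m), n l) = sb m := by
    intro m; rw [auxA, hsbdef]; rw [hnndef]
  clear_value sb
  have hsbk : sb k = T := by
    have h1 : univ.filter (fun l : Fin k => (l : ℕ) < k) = univ := by
      ext l; simpa using l.isLt
    rw [← hsf k, h1]
    exact hnsum
  have hn1 : ∀ i : Fin k, 1 ≤ n i := by
    intro i
    have h1 : tmin * T ≤ tv i * T := mul_le_mul_of_nonneg_right (htminle i) hT0.le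
    have h2 : 2 ≤ tmin * (T:ℝ) := by
      rw [div_le_iff₀ htmin0] at hTr3
      linarith
    have h3 := (abs_le.1 (hn i)).1
    have h4 : (1:ℝ) ≤ (n i : ℝ) := by linarith
    exact_mod_cast h4
  have hblock : ∀ (i : Fin k) (u : ℕ), sb (i : ℕ) ≤ u → u < sb ((i : ℕ) + 1) →
      ∃ hu : u < T, aseq ⟨u, hu⟩ = α i := by
    intro i u h1 h2
    have hu : u < T := by
      have h3 : sb ((i : ℕ) + 1) ≤ sb k := hsbmono i.isLt
      omega
    refine ⟨hu, haseq ⟨u, hu⟩ i ?_ ?_⟩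
    · rw [hsf]; exact h1
    · have hfe : univ.filter (fun l : Fin k => (l : ℕ) ≤ (i : ℕ))
          = univ.filter (fun l : Fin k => (l : ℕ) < (i : ℕ) + 1) := by
        ext l
        simp only [Finset.mem_filter, Finset.mem_univ, true_and]
        omega
      rw [hfe, hsf]
      exact h2
  -- P as range sums
  have hPT : ∀ (m : ℕ) (j : Fin N),
      P m j = ∑ u ∈ Finset.range m, (if h : u < k then tv ⟨u, h⟩ * v ⟨u, h⟩ j else 0) := by
    intro m j; rw [hP m j, auxA]; simp only [hvdef]
  have hPstep : ∀ (i : Fin k) (j : Fin N), P ((i : ℕ) + 1) j = P (i : ℕ) j + tv i * v i j := by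
    intro i j
    rw [hPT, hPT, Finset.sum_range_succ, dif_pos i.isLt]
  -- cumulative rewards
  set r : Fin N → ℕ → ℝ :=
    fun j u => if h : u < T then ∑ a, aseq ⟨u, h⟩ a * uL a j else 0 with hrdef
  set σc : Fin N → ℕ → ℝ := fun j t => ∑ u ∈ Finset.range t, r j u with hσdef
  have hrblock : ∀ (i : Fin k) (u : ℕ), sb (i : ℕ) ≤ u → u < sb ((i : ℕ) + 1) →
      ∀ j, r j u = v i j := by
    intro i u h1 h2 j
    obtain ⟨hu, ha⟩ := hblock i u h1 h2
    simp only [hrdef, dif_pos hu, ha, hvdef]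
  set PnR : ℕ → Fin N → ℝ :=
    fun m j => ∑ u ∈ Finset.range m, (nn u : ℝ) * (if h : u < k then v ⟨u, h⟩ j else 0)
    with hPnRdef
  clear_value r σc PnR
  have hsig : ∀ (t : ℕ) (i : Fin k), sb (i : ℕ) ≤ t → t ≤ sb ((i : ℕ) + 1) →
      ∀ j, σc j t = PnR (i : ℕ) j + ((t - sb (i : ℕ) : ℕ) : ℝ) * v i j := by
    intro t
    induction t with
    | zero =>
      intro i h1 h2 j
      have hi0 : (i : ℕ) = 0 := by
        by_contra h
        have hipos : 0 < (i : ℕ) := Nat.pos_of_ne_zero h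
        have h3 : nn 0 ≤ sb (i : ℕ) := by
          rw [hsbdef]
          apply Finset.single_le_sum (f := nn) (fun _ _ => Nat.zero_le _)
          exact Finset.mem_range.2 hipos
        have h4 : nn 0 = n ⟨0, hk⟩ := by rw [hnndef]; simp [hk]
        have h5 := hn1 ⟨0, hk⟩
        omega
      have h6 : σc j 0 = 0 := by rw [hσdef]; simp
      rw [h6, hi0]
      have h7 : sb 0 = 0 := by rw [hsbdef]; simp
      rw [h7]
      simp [hPnRdef]
    | succ t ih =>
      intro i h1 h2 j
      have hσs : σc j (t + 1) = σc j t + r j t := by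
        rw [hσdef]; exact Finset.sum_range_succ _ _
      by_cases hcase : sb (i : ℕ) ≤ t
      · have ht3 : t < sb ((i : ℕ) + 1) := Nat.lt_of_succ_le h2
        have hr : r j t = v i j := hrblock i t hcase ht3 j
        rw [hσs, ih i hcase ht3.le j, hr]
        have h4 : t + 1 - sb (i : ℕ) = (t - sb (i : ℕ)) + 1 := by omega
        rw [h4]
        push_cast
        ring
      · push_neg at hcase
        have hieq : sb (i : ℕ) = t + 1 := by omega
        have hipos : 0 < (i : ℕ) := by
          rcases Nat.eq_zero_or_pos (i : ℕ) with h0 | h0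
          · exfalso
            have h7 : sb 0 = 0 := by rw [hsbdef]; simp
            rw [h0, h7] at hieq
            omega
          · exact h0
        set i' : Fin k := ⟨(i : ℕ) - 1, lt_trans (Nat.sub_lt hipos one_pos) i.isLt⟩
          with hi'def
        have hi'succ : (i' : ℕ) + 1 = (i : ℕ) := by
          simp only [hi'def]
          omega
        have hnn' : nn (i' : ℕ) = n i' := by rw [hnndef]; simp [i'.isLt]
        have hstep : sb ((i' : ℕ) + 1) = sb (i' : ℕ) + nn (i' : ℕ) := hsbsucc _
        have hs' : sb ((i' : ℕ) + 1) = t + 1 := by rw [hi'succ]; exact hieq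
        have hpos' : 1 ≤ nn (i' : ℕ) := by rw [hnn']; exact hn1 i'
        have hs'le : sb (i' : ℕ) ≤ t := by omega
        have ht3 : t < sb ((i' : ℕ) + 1) := by omega
        have hr : r j t = v i' j := hrblock i' t hs'le ht3 j
        rw [hσs, ih i' hs'le ht3.le j, hr]
        have hsub : t + 1 - sb (i : ℕ) = 0 := by omega
        have hmi : (t - sb (i' : ℕ)) + 1 = n i' := by omega
        have hPnRstep : PnR (i : ℕ) j = PnR (i' : ℕ) j + (n i' : ℝ) * v i' j := by
          conv_lhs => rw [← hi'succ]
          simp only [hPnRdef]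
          rw [Finset.sum_range_succ, dif_pos i'.isLt, hnn']
        rw [hsub, hPnRstep]
        have hc2 : ((t - sb (i' : ℕ) : ℕ) : ℝ) = (n i' : ℝ) - 1 := by
          have := hmi
          push_cast [← hmi]
          ring
        rw [hc2]
        push_cast
        ring
  have hPnRapprox : ∀ (i : Fin k) (j : Fin N), |PnR (i : ℕ) j - T * P (i : ℕ) j| ≤ k := by
    intro i j
    have e1 : PnR (i : ℕ) j - T * P (i : ℕ) j
        = ∑ u ∈ Finset.range (i : ℕ),
          (((nn u : ℝ) - T * (if h : u < k then tv ⟨u, h⟩ else 0))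
            * (if h : u < k then v ⟨u, h⟩ j else 0)) := by
      rw [hPnRdef, hPT, Finset.mul_sum, ← Finset.sum_sub_distrib]
      apply Finset.sum_congr rfl
      intro u _
      split_ifs with h
      · ring
      · simp
    rw [e1]
    calc |∑ u ∈ Finset.range (i : ℕ),
          (((nn u : ℝ) - T * (if h : u < k then tv ⟨u, h⟩ else 0))
            * (if h : u < k then v ⟨u, h⟩ j else 0))|
        ≤ ∑ u ∈ Finset.range (i : ℕ), |(((nn u : ℝ) - T * (if h : u < k then tv ⟨u, h⟩ else 0))
            * (if h : u < k then v ⟨u, h⟩ j else 0))| := Finset.abs_sum_le_sum_abs _ _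
      _ ≤ ∑ _u ∈ Finset.range (i : ℕ), 1 := by
          apply Finset.sum_le_sum
          intro u hu
          have huk : u < k := lt_trans (Finset.mem_range.1 hu) i.isLt
          rw [dif_pos huk, dif_pos huk, abs_mul]
          have h5 : |(nn u : ℝ) - T * tv ⟨u, huk⟩| ≤ 1 := by
            have h6 := hn ⟨u, huk⟩
            have h7 : nn u = n ⟨u, huk⟩ := by rw [hnndef]; simp [huk]
            rw [h7, mul_comm]
            exact h6
          have h8 := hvb ⟨u, huk⟩ j
          calc |(nn u : ℝ) - T * tv ⟨u, huk⟩| * |v ⟨u, huk⟩ j| ≤ 1 * 1 := by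
                apply mul_le_mul h5 h8 (abs_nonneg _) zero_le_one
            _ = 1 := by norm_num
      _ = ((i : ℕ) : ℝ) := by rw [Finset.sum_const, Finset.card_range]; simp
      _ ≤ (k : ℝ) := by exact_mod_cast i.isLt.le
  have hgap : ∀ (i : Fin k) (t : ℕ), sb (i : ℕ) ≤ t → t < sb ((i : ℕ) + 1) →
      δ * n i ≤ ((t - sb (i : ℕ) : ℕ) : ℝ) →
      ((t - sb (i : ℕ) : ℕ) : ℝ) + δ * n i ≤ (n i : ℝ) →
      ∀ j, j ≠ jv i → σc j t < σc (jv i) t - γ * T := by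
    intro i t h1 h2 hm1 hm2 j hj
    have hnipos : (0:ℝ) < n i := by exact_mod_cast hn1 i
    have hδn : 0 < δ * n i := by positivity
    set m : ℕ := t - sb (i : ℕ) with hmdef
    have hmlen : (m : ℝ) ≤ n i := by linarith
    set θ : ℝ := (m : ℝ) / n i with hθdef
    have hθn : θ * (n i : ℝ) = m := div_mul_cancel₀ _ hnipos.ne'
    have hθδ : δ ≤ θ := (le_div_iff₀ hnipos).2 (by linarith)
    have hθ1 : θ ≤ 1 - δ := by
      rw [hθdef, div_le_iff₀ hnipos]
      nlinarith
    have happrox : ∀ j' : Fin N,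
        |σc j' t - (T * P (i : ℕ) j' + θ * (T * tv i) * v i j')| ≤ (k : ℝ) + 1 := by
      intro j'
      rw [hsig t i h1 h2.le j']
      have e1 : PnR (i : ℕ) j' + (m : ℝ) * v i j'
            - (T * P (i : ℕ) j' + θ * (T * tv i) * v i j')
          = (PnR (i : ℕ) j' - T * P (i : ℕ) j')
            + (θ * ((n i : ℝ) - T * tv i)) * v i j' := by
        rw [← hθn]; ring
      rw [e1]
      have hB : |(θ * ((n i : ℝ) - T * tv i)) * v i j'| ≤ 1 := by
        rw [abs_mul, abs_mul]
        have h5 : |θ| ≤ 1 := abs_le.2 ⟨by linarith, by linarith⟩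
        have h6 : |(n i : ℝ) - T * tv i| ≤ 1 := by
          rw [mul_comm]; exact hn i
        have h7 := hvb i j'
        have hA : |θ| * |(n i : ℝ) - T * tv i| ≤ 1 := by
          calc |θ| * |(n i : ℝ) - T * tv i| ≤ 1 * 1 :=
                mul_le_mul h5 h6 (abs_nonneg _) zero_le_one
            _ = 1 := by norm_num
        calc |θ| * |(n i : ℝ) - T * tv i| * |v i j'| ≤ 1 * 1 :=
              mul_le_mul hA h7 (abs_nonneg _) zero_le_one
          _ = 1 := by norm_num
      calc |(PnR (i : ℕ) j' - T * P (i : ℕ) j')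
            + (θ * ((n i : ℝ) - T * tv i)) * v i j'|
          ≤ |PnR (i : ℕ) j' - T * P (i : ℕ) j'|
            + |(θ * ((n i : ℝ) - T * tv i)) * v i j'| := abs_add_le _ _
        _ ≤ (k : ℝ) + 1 := add_le_add (hPnRapprox i j') hB
    have hg0 := (hvalid i j).1
    have hg1 := (hvalid i j).2
    have hLdiff : (T * P (i : ℕ) (jv i) + θ * (T * tv i) * v i (jv i))
          - (T * P (i : ℕ) j + θ * (T * tv i) * v i j)
        = T * ((1 - θ) * (P (i : ℕ) (jv i) - P (i : ℕ) j)
          + θ * (P ((i : ℕ) + 1) (jv i) - P ((i : ℕ) + 1) j)) := by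
      rw [hPstep i j, hPstep i (jv i)]
      ring
    have hge : δ * c ≤ (1 - θ) * (P (i : ℕ) (jv i) - P (i : ℕ) j)
        + θ * (P ((i : ℕ) + 1) (jv i) - P ((i : ℕ) + 1) j) := by
      have h7 := hcle i j hj
      have h8 : δ ≤ 1 - θ := by linarith
      have e0 : δ * (P (i : ℕ) (jv i) - P (i : ℕ) j)
          ≤ (1 - θ) * (P (i : ℕ) (jv i) - P (i : ℕ) j) :=
        mul_le_mul_of_nonneg_right h8 (by linarith)
      have e2 : δ * (P ((i : ℕ) + 1) (jv i) - P ((i : ℕ) + 1) j)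
          ≤ θ * (P ((i : ℕ) + 1) (jv i) - P ((i : ℕ) + 1) j) :=
        mul_le_mul_of_nonneg_right hθδ (by linarith)
      have e3 : δ * c ≤ δ * ((P (i : ℕ) (jv i) - P (i : ℕ) j)
          + (P ((i : ℕ) + 1) (jv i) - P ((i : ℕ) + 1) j)) :=
        mul_le_mul_of_nonneg_left h7 hδ.le
      linarith
    have hTk : 8 * ((k : ℝ) + 1) ≤ T * (δ * c) := by
      rw [div_le_iff₀ (mul_pos hδ hc0)] at hTr2
      linarith
    have h9 : T * (δ * c) ≤ (T * P (i : ℕ) (jv i) + θ * (T * tv i) * v i (jv i))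
          - (T * P (i : ℕ) j + θ * (T * tv i) * v i j) := by
      rw [hLdiff]
      exact mul_le_mul_of_nonneg_left hge hT0.le
    have hγT : γ * T < δ * c / 2 * T := mul_lt_mul_of_pos_right hγb hT0
    have hx := abs_le.1 (happrox j)
    have hy := abs_le.1 (happrox (jv i))
    linarith [hx.1, hx.2, hy.1, hy.2]
  -- per-round payoff
  set G : ℕ → ℝ :=
    fun u => if h : u < T then ∑ j, p ⟨u, h⟩ j * ∑ a, aseq ⟨u, h⟩ a * uO a j else 0
    with hGdef
  clear_value G
  have hround : ∀ (i : Fin k) (u : ℕ), sb (i : ℕ) ≤ u → u < sb ((i : ℕ) + 1) →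
      (w i - 2 * N * γ) -
        (if (δ * n i ≤ ((u - sb (i : ℕ) : ℕ) : ℝ) ∧
            ((u - sb (i : ℕ) : ℕ) : ℝ) + δ * n i ≤ (n i : ℝ)) then (0:ℝ) else 2)
        ≤ G u := by
    intro i u h1 h2
    obtain ⟨hu, ha⟩ := hblock i u h1 h2
    have hG : G u = ∑ j, p ⟨u, hu⟩ j * ∑ a, α i a * uO a j := by
      simp only [hGdef]
      rw [dif_pos hu, ha]
    rw [hG]
    have hpd := hpdist (⟨u, hu⟩ : Fin T)
    have hUb : ∀ j : Fin N, |∑ a, α i a * uO a j| ≤ 1 :=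
      fun j => auxDist (hdist i) (fun a => hO a j)
    have hNγ : (0:ℝ) ≤ (N:ℝ) * γ := by positivity
    split_ifs with hmid
    · -- middle rounds: all actions other than jv i have probability ≤ γ
      have hpj : ∀ j : Fin N, j ≠ jv i → p ⟨u, hu⟩ j ≤ γ := by
        intro j hj
        apply hmb ⟨u, hu⟩ j (jv i)
        show (∑ s ∈ univ.filter (fun s : Fin T => s < (⟨u, hu⟩ : Fin T)),
            ∑ a, aseq s a * uL a j)
          < (∑ s ∈ univ.filter (fun s : Fin T => s < (⟨u, hu⟩ : Fin T)),
            ∑ a, aseq s a * uL a (jv i)) - γ * T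
        have hc1 : ∀ j' : Fin N,
            (∑ s ∈ univ.filter (fun s : Fin T => s < (⟨u, hu⟩ : Fin T)),
              ∑ a, aseq s a * uL a j') = σc j' u := by
          intro j'
          rw [auxA' (fun s : Fin T => ∑ a, aseq s a * uL a j') (⟨u, hu⟩ : Fin T)]
          simp only [hσdef, hrdef]
        rw [hc1 j, hc1 (jv i)]
        exact hgap i u h1 h2 hmid.1 hmid.2 j hj
      have hstep : ∀ j : Fin N,
          p ⟨u, hu⟩ j * (∑ a, α i a * uO a (jv i)) - (if j = jv i then 0 else 2 * γ)
            ≤ p ⟨u, hu⟩ j * ∑ a, α i a * uO a j := by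
        intro j
        by_cases hj : j = jv i
        · rw [hj, if_pos rfl]; simp
        · rw [if_neg hj]
          have h3 := hpj j hj
          have h4 := hpd.1 j
          have h5 : -(2:ℝ) ≤ (∑ a, α i a * uO a j) - (∑ a, α i a * uO a (jv i)) := by
            have h6 := abs_le.1 (hUb j)
            have h7 := abs_le.1 (hUb (jv i))
            linarith
          nlinarith
      have hsum := Finset.sum_le_sum (fun j (_ : j ∈ univ) => hstep j)
      have hlhs : ∑ j : Fin N,
          (p ⟨u, hu⟩ j * (∑ a, α i a * uO a (jv i)) - (if j = jv i then 0 else 2 * γ))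
          = (∑ a, α i a * uO a (jv i))
            - ∑ j : Fin N, (if j = jv i then (0:ℝ) else 2 * γ) := by
        rw [Finset.sum_sub_distrib, ← Finset.sum_mul, hpd.2, one_mul]
      have hite : ∑ j : Fin N, (if j = jv i then (0:ℝ) else 2 * γ) ≤ 2 * N * γ := by
        calc ∑ j : Fin N, (if j = jv i then (0:ℝ) else 2 * γ)
            ≤ ∑ _j : Fin N, 2 * γ := by
              apply Finset.sum_le_sum
              intro j _
              split_ifs
              · positivity
              · exact le_refl _
          _ = N * (2 * γ) := by
              rw [Finset.sum_const, Finset.card_univ, Fintype.card_fin, nsmul_eq_mul]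
          _ = 2 * N * γ := by ring
      have hwU : w i = ∑ a, α i a * uO a (jv i) := by rw [hwdef]
      rw [hlhs] at hsum
      linarith
    · -- boundary rounds: use the trivial bound
      have h6 : ∀ j : Fin N, -(p ⟨u, hu⟩ j) ≤ p ⟨u, hu⟩ j * ∑ a, α i a * uO a j := by
        intro j
        have h4 := hpd.1 j
        have h5 := (abs_le.1 (hUb j)).1
        nlinarith
      have h7 : -(1:ℝ) ≤ ∑ j, p ⟨u, hu⟩ j * ∑ a, α i a * uO a j := by
        have h8 := Finset.sum_le_sum (fun j (_ : j ∈ univ) => h6 j)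
        rw [Finset.sum_neg_distrib, hpd.2] at h8
        exact h8
      have h8 : w i ≤ 1 := (abs_le.1 (hwb i)).2
      linarith
  have hBsum : ∀ i : Fin k,
      ∑ m ∈ Finset.range (n i),
        (if (δ * n i ≤ (m : ℝ) ∧ (m : ℝ) + δ * n i ≤ (n i : ℝ)) then (0:ℝ) else 2)
        ≤ 4 * δ * n i + 4 := by
    intro i
    set q : ℕ := ⌈δ * (n i : ℝ)⌉₊ with hqdef
    set S : Finset ℕ := Finset.range q ∪ Finset.Ico (n i - q) (n i) with hSdef
    have hterm : ∀ m ∈ Finset.range (n i),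
        (if (δ * n i ≤ (m : ℝ) ∧ (m : ℝ) + δ * n i ≤ (n i : ℝ)) then (0:ℝ) else 2)
          ≤ (if m ∈ S then (2:ℝ) else 0) := by
      intro m hm
      by_cases hmem : m ∈ S
      · rw [if_pos hmem]
        split_ifs <;> norm_num
      · rw [if_neg hmem]
        have hm1 : m ∉ Finset.range q := fun h => hmem (Finset.mem_union_left _ h)
        have hm2 : m ∉ Finset.Ico (n i - q) (n i) := fun h => hmem (Finset.mem_union_right _ h)
        have hq1 : q ≤ m := by
          by_contra h
          exact hm1 (Finset.mem_range.2 (by omega))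
        have hmn : m < n i := Finset.mem_range.1 hm
        have hq2 : m < n i - q := by
          rcases Nat.lt_or_ge m (n i - q) with h | h
          · exact h
          · exact absurd (Finset.mem_Ico.2 ⟨h, hmn⟩) hm2
        have hceil : δ * (n i : ℝ) ≤ q := Nat.le_ceil _
        have hcast1 : (q : ℝ) ≤ m := by exact_mod_cast hq1
        have hcast2 : m + q < n i := by omega
        have hcast3 : (m : ℝ) + q ≤ (n i : ℝ) := by exact_mod_cast hcast2.le
        rw [if_pos ⟨by linarith, by linarith⟩]
    have hcard : (Finset.range (n i) ∩ S).card ≤ 2 * q := by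
      calc (Finset.range (n i) ∩ S).card ≤ S.card := Finset.card_le_card inter_subset_right
        _ ≤ (Finset.range q).card + (Finset.Ico (n i - q) (n i)).card := Finset.card_union_le _ _
        _ ≤ 2 * q := by
            rw [Finset.card_range, Nat.card_Ico]
            omega
    have hqr : (q : ℝ) ≤ δ * n i + 1 := by
      have := Nat.ceil_lt_add_one (by positivity : (0:ℝ) ≤ δ * (n i : ℝ))
      linarith
    calc ∑ m ∈ Finset.range (n i),
          (if (δ * n i ≤ (m : ℝ) ∧ (m : ℝ) + δ * n i ≤ (n i : ℝ)) then (0:ℝ) else 2)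
        ≤ ∑ m ∈ Finset.range (n i), (if m ∈ S then (2:ℝ) else 0) :=
          Finset.sum_le_sum hterm
      _ = ∑ _m ∈ Finset.range (n i) ∩ S, (2:ℝ) := Finset.sum_ite_mem _ _ _
      _ = ((Finset.range (n i) ∩ S).card : ℝ) * 2 := by
          rw [Finset.sum_const, nsmul_eq_mul]
      _ ≤ ((2 * q : ℕ) : ℝ) * 2 := by
          have : ((Finset.range (n i) ∩ S).card : ℝ) ≤ ((2 * q : ℕ) : ℝ) := by
            exact_mod_cast hcard
          linarith
      _ ≤ 4 * δ * n i + 4 := by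
          push_cast
          linarith
  have hblockLB : ∀ i : Fin k,
      (n i : ℝ) * (w i - 2 * N * γ) - (4 * δ * n i + 4)
        ≤ ∑ u ∈ Finset.Ico (sb (i : ℕ)) (sb ((i : ℕ) + 1)), G u := by
    intro i
    have hnn : nn (i : ℕ) = n i := by rw [hnndef]; simp [i.isLt]
    have hIco : ∑ u ∈ Finset.Ico (sb (i : ℕ)) (sb ((i : ℕ) + 1)), G u
        = ∑ m ∈ Finset.range (n i), G (sb (i : ℕ) + m) := by
      rw [hsbsucc, hnn, Finset.sum_Ico_eq_sum_range, Nat.add_sub_cancel_left]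
    rw [hIco]
    have hterm : ∀ m ∈ Finset.range (n i),
        (w i - 2 * N * γ) -
          (if (δ * n i ≤ (m : ℝ) ∧ (m : ℝ) + δ * n i ≤ (n i : ℝ)) then (0:ℝ) else 2)
          ≤ G (sb (i : ℕ) + m) := by
      intro m hm
      have h1 : sb (i : ℕ) ≤ sb (i : ℕ) + m := Nat.le_add_right _ _
      have h2 : sb (i : ℕ) + m < sb ((i : ℕ) + 1) := by
        rw [hsbsucc, hnn]
        have := Finset.mem_range.1 hm
        omega
      have h3 := hround i (sb (i : ℕ) + m) h1 h2
      rw [Nat.add_sub_cancel_left] at h3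
      exact h3
    have hsum := Finset.sum_le_sum hterm
    have hlhs : ∑ m ∈ Finset.range (n i),
        ((w i - 2 * N * γ) -
          (if (δ * n i ≤ (m : ℝ) ∧ (m : ℝ) + δ * n i ≤ (n i : ℝ)) then (0:ℝ) else 2))
        = (n i : ℝ) * (w i - 2 * N * γ)
          - ∑ m ∈ Finset.range (n i),
            (if (δ * n i ≤ (m : ℝ) ∧ (m : ℝ) + δ * n i ≤ (n i : ℝ)) then (0:ℝ) else 2) := by
      rw [Finset.sum_sub_distrib, Finset.sum_const, Finset.card_range, nsmul_eq_mul]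
    rw [hlhs] at hsum
    have := hBsum i
    linarith
  have htot : ∀ M : ℕ, M ≤ k →
      ∑ u ∈ Finset.range M,
        (if h : u < k then
          ((n ⟨u, h⟩ : ℝ) * (w ⟨u, h⟩ - 2 * N * γ) - (4 * δ * n ⟨u, h⟩ + 4)) else 0)
        ≤ ∑ u ∈ Finset.range (sb M), G u := by
    intro M
    induction M with
    | zero =>
      intro _
      have h7 : sb 0 = 0 := by rw [hsbdef]; simp
      rw [h7]
      simp
    | succ M ih =>
      intro hM
      have hM' : M < k := hM
      rw [Finset.sum_range_succ, dif_pos hM']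
      have hsplit : ∑ u ∈ Finset.range (sb (M + 1)), G u
          = ∑ u ∈ Finset.range (sb M), G u
            + ∑ u ∈ Finset.Ico (sb M) (sb (M + 1)), G u := by
        simp only [Finset.range_eq_Ico]
        exact (Finset.sum_Ico_consecutive _ (Nat.zero_le _) (hsbmono (Nat.le_succ M))).symm
      rw [hsplit]
      have hb := hblockLB ⟨M, hM'⟩
      exact add_le_add (ih hM'.le) hb
  -- assemble
  have hL1 : ∑ t : Fin T, ∑ j : Fin N, p t j * ∑ a, aseq t a * uO a j
      = ∑ u ∈ Finset.range T, G u := by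
    rw [← Fin.sum_univ_eq_sum_range (fun u => G u) T]
    apply Finset.sum_congr rfl
    intro t _
    have e : G (t : ℕ) = ∑ j, p t j * ∑ a, aseq t a * uO a j := by
      simp only [hGdef]
      rw [dif_pos t.isLt]
    exact e.symm
  have hmain := htot k le_rfl
  rw [hsbk] at hmain
  have hR1 : ∑ u ∈ Finset.range k,
      (if h : u < k then
        ((n ⟨u, h⟩ : ℝ) * (w ⟨u, h⟩ - 2 * N * γ) - (4 * δ * n ⟨u, h⟩ + 4)) else 0)
      = ∑ i : Fin k, ((n i : ℝ) * (w i - 2 * N * γ) - (4 * δ * n i + 4)) := by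
    rw [← Fin.sum_univ_eq_sum_range]
    apply Finset.sum_congr rfl
    intro i _
    rw [dif_pos i.isLt]
  rw [hR1] at hmain
  have hsumn : ∑ i : Fin k, (n i : ℝ) = T := by exact_mod_cast hnsum
  have hterm2 : ∀ i : Fin k, tv i * w i * T - 1 ≤ (n i : ℝ) * w i := by
    intro i
    have h5 : |((n i : ℝ) - tv i * T) * w i| ≤ 1 := by
      rw [abs_mul]
      calc |(n i : ℝ) - tv i * T| * |w i| ≤ 1 * 1 :=
            mul_le_mul (hn i) (hwb i) (abs_nonneg _) zero_le_one
        _ = 1 := by norm_num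
    have h6 := (abs_le.1 h5).1
    have e : (n i : ℝ) * w i = tv i * w i * T + ((n i : ℝ) - tv i * T) * w i := by ring
    linarith
  have hsum3 := Finset.sum_le_sum (fun i (_ : i ∈ univ) => hterm2 i)
  have hlhs3 : ∑ i : Fin k, (tv i * w i * T - 1)
      = (∑ i : Fin k, tv i * w i) * T - k := by
    rw [Finset.sum_sub_distrib, Finset.sum_const, Finset.card_univ, Fintype.card_fin,
      ← Finset.sum_mul, nsmul_eq_mul, mul_one]
  rw [hlhs3] at hsum3
  have ha : ∑ i : Fin k, 2 * (N : ℝ) * γ * (n i : ℝ) = 2 * N * γ * T := by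
    rw [← Finset.mul_sum, hsumn]
  have hb : ∑ i : Fin k, 4 * δ * (n i : ℝ) = 4 * δ * T := by
    rw [← Finset.mul_sum, hsumn]
  have hc4 : ∑ _i : Fin k, (4:ℝ) = 4 * k := by
    rw [Finset.sum_const, Finset.card_univ, Fintype.card_fin, nsmul_eq_mul]
    ring
  have hexp : ∑ i : Fin k, ((n i : ℝ) * (w i - 2 * N * γ) - (4 * δ * n i + 4))
      = (∑ i : Fin k, (n i : ℝ) * w i) - 2 * N * γ * T - 4 * δ * T - 4 * k := by
    have e1 : ∀ i : Fin k, (n i : ℝ) * (w i - 2 * N * γ) - (4 * δ * n i + 4)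
        = (n i : ℝ) * w i - 2 * (N : ℝ) * γ * (n i : ℝ) - 4 * δ * (n i : ℝ) - 4 :=
      fun i => by ring
    rw [Finset.sum_congr rfl (fun i _ => e1 i), Finset.sum_sub_distrib,
      Finset.sum_sub_distrib, Finset.sum_sub_distrib, ha, hb, hc4]
  rw [hexp] at hmain
  have hN' : (0:ℝ) < N := by exact_mod_cast hN
  have h2Nγ : 2 * (N : ℝ) * γ ≤ ε / 6 := by
    have h9 : 2 * (N : ℝ) * γ ≤ 2 * (N : ℝ) * (ε / (12 * N)) :=
      mul_le_mul_of_nonneg_left hγa.le (by positivity)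
    have e : 2 * (N : ℝ) * (ε / (12 * N)) = ε / 6 := by
      field_simp
      ring
    linarith
  have h2NγT : 2 * (N : ℝ) * γ * T ≤ ε / 6 * T :=
    mul_le_mul_of_nonneg_right h2Nγ hT0.le
  have h4δT : 4 * δ * T = ε / 3 * T := by rw [hδdef]; ring
  have h5k : 5 * (k : ℝ) ≤ ε * T / 2 := by
    rw [div_le_iff₀ hε] at hTr1
    linarith
  have hgoalw : (∑ i, tv i * ∑ a, α i a * uO a (jv i)) = ∑ i : Fin k, tv i * w i := by
    rw [hwdef]
  have hprod : ((∑ i : Fin k, tv i * w i) - ε) * T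
      = (∑ i : Fin k, tv i * w i) * T - ε * T := by ring
  rw [hgoalw, hL1, hprod]
  linarith [hsum3, hmain, h2NγT, h4δT, h5k]
end

section
/- (Theorem 6, Part 2; core inequality) Let (A, B, u_O, u_L) be a finite two-player bimatrix game with |u_O|, |u_L| ≤ 1 and B = {b_1, …, b_N}, and let U* be the value of the associated control problem. Let T ≥ 1, let γ > 2/T, and let α^1, …, α^T ∈ Δ(A) be any sequence of optimizer mixed strategies. Define σ(b_j, s) = Σ_{s'=1}^{s} u_L(α^{s'}, b_j) and, for each round t, J_t = { b_j ∈ B : max_i σ(b_i, t−1) − σ(b_j, t−1) < γT }. Then Σ_{t=1}^T min_{b ∈ J_t} u_O(α^t, b) ≤ U*·T. -/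
/-!
Play the rounds one after another in the control problem, spending time `1 / T` on `α^t` in
round `t`; round `t` then moves the state along a segment starting at `σ(·, t − 1) / T`. The
closed regions `S_j` cover this segment, and a finite closed cover of an interval admits a
subdivision whose pieces begin and end in a common member of the cover, so the rounds can be
played as a valid strategy. Each response `j` used in round `t` is a best response somewhere on
the segment, so, as `|u_L| ≤ 1`, it is within `2 / T < γ` of the best at the start, i.e.
`b_j ∈ J_t`. Hence the utility of this strategy, which is at most `U*`, is at least
`(1 / T) ∑_t min_{b ∈ J_t} u_O(α^t, b)`.
-/
open Finset

/-- The set of utilities `U(π)` of valid strategies `π` for the control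
problem: `π = ((α_1, t_1, j_1), …, (α_k, t_k, j_k))` with `t_i ≥ 0`,
`∑ t_i = 1`, and each state `P_{i−1} = ∑_{l < i} t_l · v(α_l)` and
`P_i = ∑_{l ≤ i} t_l · v(α_l)` lying in the region `S_{j_i}`, where
`v(α)_j = u_L(α, b_j)`.  Its supremum is the value `U*`. -/
def ControlSet {A : Type*} [Fintype A] (N : ℕ) (uO uL : A → Fin N → ℝ) : Set ℝ :=
  {u | ∃ (k : ℕ) (α : Fin k → A → ℝ) (tv : Fin k → ℝ) (jv : Fin k → Fin N),
    (∀ i, IsDist (α i)) ∧ (∀ i, 0 ≤ tv i) ∧ (∑ i, tv i = 1) ∧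
    (∀ (i : Fin k) (j : Fin N),
      (∑ l ∈ univ.filter (fun l : Fin k => (l : ℕ) < (i : ℕ)),
          tv l * ∑ a, α l a * uL a j)
        ≤ (∑ l ∈ univ.filter (fun l : Fin k => (l : ℕ) < (i : ℕ)),
          tv l * ∑ a, α l a * uL a (jv i)) ∧
      (∑ l ∈ univ.filter (fun l : Fin k => (l : ℕ) ≤ (i : ℕ)),
          tv l * ∑ a, α l a * uL a j)
        ≤ (∑ l ∈ univ.filter (fun l : Fin k => (l : ℕ) ≤ (i : ℕ)),
          tv l * ∑ a, α l a * uL a (jv i))) ∧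
    u = ∑ i, tv i * ∑ a, α i a * uO a (jv i)}

section RegionWalk

variable {X E : Type*}

def RegionWalk [Add E] (d : X → E) (R : X → Set E) : E → List X → Prop
  | _, [] => True
  | x, s :: L => x ∈ R s ∧ x + d s ∈ R s ∧ RegionWalk d R (x + d s) L

variable {d : X → E} {R : X → Set E}

theorem regionWalk_append [AddMonoid E] {x : E} {L₁ L₂ : List X} :
    RegionWalk d R x (L₁ ++ L₂) ↔
      RegionWalk d R x L₁ ∧ RegionWalk d R (x + (L₁.map d).sum) L₂ := by
  induction L₁ generalizing x with
  | nil => simp [RegionWalk]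
  | cons s L ih => simp [RegionWalk, ih, add_assoc, and_assoc]

theorem RegionWalk.nonempty [Add E] {x : E} {L : List X} (h : RegionWalk d R x L) {s : X}
    (hs : s ∈ L) : (R s).Nonempty := by
  induction L generalizing x with
  | nil => simp at hs
  | cons s' L ih =>
    obtain rfl | hs := List.mem_cons.mp hs
    · exact ⟨x, h.1⟩
    · exact ih h.2.2 hs

theorem RegionWalk.map [Add E] {Y F : Type*} [Add F] {d' : Y → F} {R' : Y → Set F}
    (f : E → F) (g : X → Y) (hR : ∀ s x, x ∈ R s → f x ∈ R' (g s))
    (hd : ∀ s x, f (x + d s) = f x + d' (g s)) {x : E} {L : List X}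
    (h : RegionWalk d R x L) : RegionWalk d' R' (f x) (L.map g) := by
  induction L generalizing x with
  | nil => trivial
  | cons s L ih => exact ⟨hR s x h.1, hd s x ▸ hR s _ h.2.1, hd s x ▸ ih h.2.2⟩

theorem RegionWalk.mem_prefix [AddCommMonoid E] {x : E} {L : List X}
    (h : RegionWalk d R x L) (i : Fin L.length) :
    x + ∑ l ∈ univ.filter (fun l : Fin L.length => (l : ℕ) < i), d L[l] ∈ R L[i] ∧
      x + ∑ l ∈ univ.filter (fun l : Fin L.length => (l : ℕ) ≤ i), d L[l] ∈ R L[i] := by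
  induction L generalizing x with
  | nil => exact i.elim0
  | cons s L ih =>
    simp only [Finset.sum_filter]
    induction i using Fin.cases with
    | zero => simpa [Fin.sum_univ_succ] using ⟨h.1, h.2.1⟩
    | succ i =>
      simpa [Fin.sum_univ_succ, Finset.sum_filter, add_assoc] using ih h.2.2 i

end RegionWalk

theorem exists_regionWalk_of_closed_cover {ι : Type*} [DecidableEq ι] {I : ι → Set ℝ}
    (hI : ∀ i, IsClosed (I i)) (F : Finset ι) {a b : ℝ} (hab : a ≤ b)
    (hcover : Set.Icc a b ⊆ ⋃ i ∈ F, I i) :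
    ∃ L : List (ℝ × ι), (∀ p ∈ L, 0 ≤ p.1) ∧ (L.map Prod.fst).sum = b - a ∧
      RegionWalk Prod.fst (fun p => I p.2) a L := by
  induction F using Finset.strongInduction generalizing a with
  | H F ih =>
  obtain ⟨j, hjF, haj⟩ : ∃ j ∈ F, a ∈ I j := by
    simpa using hcover (Set.left_mem_Icc.mpr hab)
  set K := I j ∩ Set.Icc a b
  have hK : IsCompact K := isCompact_Icc.inter_left (hI j)
  have hcK : sSup K ∈ K := hK.sSup_mem ⟨a, haj, le_rfl, hab⟩
  set c := sSup K
  -- Beyond `c` the set `I j` is no longer met, so the rest of the cover covers `(c, b]`, hence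
  -- its closure `[c, b]`.
  obtain hcb | hcb := eq_or_lt_of_le hcK.2.2
  · exact ⟨[(b - a, j)], by simpa using hab, by simp, haj, by simpa [← hcb] using hcK.1, trivial⟩
  have hrest : Set.Icc c b ⊆ ⋃ i ∈ F.erase j, I i := by
    rw [← closure_Ioc hcb.ne]
    refine closure_minimal (fun σ hσ => ?_) (isClosed_biUnion_finset fun i _ => hI i)
    obtain ⟨i, hiF, hσi⟩ : ∃ i ∈ F, σ ∈ I i := by
      simpa using hcover ⟨hcK.2.1.trans hσ.1.le, hσ.2⟩
    have hij : i ≠ j := by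
      rintro rfl
      exact hσ.1.not_ge (le_csSup hK.bddAbove ⟨hσi, hcK.2.1.trans hσ.1.le, hσ.2⟩)
    simpa using ⟨i, ⟨hij, hiF⟩, hσi⟩
  obtain ⟨L, hL0, hLsum, hLwalk⟩ := ih _ (Finset.erase_ssubset hjF) hcb.le hrest
  refine ⟨(c - a, j) :: L, ?_, ?_, haj, by simpa using hcK.1, by simpa using hLwalk⟩
  · simpa [hcK.2.1] using hL0
  · simp [hLsum]

section ControlProblem

variable {A : Type*} [Fintype A] {N : ℕ}

def learnerPayoff (uL : A → Fin N → ℝ) (α : A → ℝ) : Fin N → ℝ :=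
  fun j => ∑ a, α a * uL a j

def bestResponseRegion (j : Fin N) : Set (Fin N → ℝ) :=
  {P | ∀ i, P i ≤ P j}

structure ControlStep (A : Type*) (N : ℕ) where
  α : A → ℝ
  t : ℝ
  j : Fin N

namespace ControlStep

def disp (uL : A → Fin N → ℝ) (s : ControlStep A N) : Fin N → ℝ :=
  s.t • learnerPayoff uL s.α

def utility (uO : A → Fin N → ℝ) (s : ControlStep A N) : ℝ :=
  s.t * ∑ a, s.α a * uO a s.j

end ControlStep

def IsControlPath (uL : A → Fin N → ℝ) (P : Fin N → ℝ) (π : List (ControlStep A N)) : Prop :=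
  (∀ s ∈ π, IsDist s.α ∧ 0 ≤ s.t) ∧
    RegionWalk (ControlStep.disp uL) (fun s => bestResponseRegion s.j) P π

variable {uO uL : A → Fin N → ℝ}

theorem IsControlPath.append {P : Fin N → ℝ} {π₁ π₂ : List (ControlStep A N)}
    (h₁ : IsControlPath uL P π₁) (h₂ : IsControlPath uL (P + (π₁.map (·.disp uL)).sum) π₂) :
    IsControlPath uL P (π₁ ++ π₂) := by
  refine ⟨fun s hs => ?_, regionWalk_append.mpr ⟨h₁.2, h₂.2⟩⟩
  obtain hs | hs := List.mem_append.mp hs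
  exacts [h₁.1 s hs, h₂.1 s hs]

theorem IsControlPath.utility_mem_controlSet {π : List (ControlStep A N)}
    (hπ : IsControlPath uL 0 π) (htime : (π.map (·.t)).sum = 1) :
    (π.map (·.utility uO)).sum ∈ ControlSet N uO uL := by
  refine ⟨π.length, fun l => π[l].α, fun l => π[l].t, fun l => π[l].j,
    fun l => (hπ.1 _ (List.getElem_mem _)).1, fun l => (hπ.1 _ (List.getElem_mem _)).2,
    by simpa using htime, fun i j => ?_, (Fin.sum_univ_fun_getElem π (·.utility uO)).symm⟩
  have h := hπ.2.mem_prefix i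
  simp only [bestResponseRegion, Set.mem_ofPred_eq, zero_add, Finset.sum_apply,
    ControlStep.disp, Pi.smul_apply, smul_eq_mul, learnerPayoff] at h
  exact ⟨h.1 j, h.2 j⟩

theorem isClosed_bestResponseRegion (j : Fin N) : IsClosed (bestResponseRegion j) := by
  simp only [bestResponseRegion, Set.ofPred_forall]
  exact isClosed_iInter fun i => isClosed_le (continuous_apply i) (continuous_apply j)

theorem abs_learnerPayoff_le (hL : ∀ a j, |uL a j| ≤ 1) {α : A → ℝ} (hα : IsDist α) (j : Fin N) :
    |learnerPayoff uL α j| ≤ 1 :=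
  calc |learnerPayoff uL α j| ≤ ∑ a, |α a * uL a j| := Finset.abs_sum_le_sum_abs _ _
    _ ≤ ∑ a, α a := Finset.sum_le_sum fun a _ => by
        rw [abs_mul, abs_of_nonneg (hα.1 a)]
        exact mul_le_of_le_one_right (hα.1 a) (hL a j)
    _ = 1 := hα.2

theorem sub_le_of_add_smul_mem_bestResponseRegion {P v : Fin N → ℝ} (hv : ∀ i, |v i| ≤ 1)
    {σ τ : ℝ} (hσ : σ ∈ Set.Icc 0 τ) {j : Fin N} (h : P + σ • v ∈ bestResponseRegion j)
    (i : Fin N) : P i - P j ≤ 2 * τ := by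
  have hij : P i + σ * v i ≤ P j + σ * v j := h i
  have hi := abs_le.mp (hv i)
  have hj := abs_le.mp (hv j)
  nlinarith [hσ.1, hσ.2]

theorem sum_map_disp_of_forall_α_eq {π : List (ControlStep A N)} {α : A → ℝ}
    (h : ∀ s ∈ π, s.α = α) :
    (π.map (·.disp uL)).sum = (π.map (·.t)).sum • learnerPayoff uL α := by
  rw [List.sum_smul, List.map_map]
  exact congrArg List.sum (List.map_congr_left fun s hs => by simp [ControlStep.disp, h s hs])

theorem mul_le_sum_map_utility {π : List (ControlStep A N)} (hπ : ∀ s ∈ π, 0 ≤ s.t) {m : ℝ}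
    (hm : ∀ s ∈ π, m ≤ ∑ a, s.α a * uO a s.j) :
    (π.map (·.t)).sum * m ≤ (π.map (·.utility uO)).sum := by
  rw [← List.sum_map_mul_right]
  exact List.sum_le_sum fun s hs => mul_le_mul_of_nonneg_left (hm s hs) (hπ s hs)

theorem exists_controlPath_round [NeZero N] (P : Fin N → ℝ) {α : A → ℝ} (hα : IsDist α)
    {τ : ℝ} (hτ : 0 ≤ τ) :
    ∃ π : List (ControlStep A N), IsControlPath uL P π ∧ (π.map (·.t)).sum = τ ∧
      ∀ s ∈ π, s.α = α ∧
        ∃ σ ∈ Set.Icc 0 τ, P + σ • learnerPayoff uL α ∈ bestResponseRegion s.j := by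
  set v := learnerPayoff uL α
  set I : Fin N → Set ℝ := fun j =>
    Set.Icc 0 τ ∩ (fun σ => P + σ • v) ⁻¹' bestResponseRegion j
  have hI : ∀ j, IsClosed (I j) := fun j =>
    isClosed_Icc.inter ((isClosed_bestResponseRegion j).preimage (by fun_prop))
  have hcover : Set.Icc 0 τ ⊆ ⋃ j ∈ univ, I j := fun σ hσ => by
    obtain ⟨j, hj⟩ := Finite.exists_max (P + σ • v)
    exact Set.mem_biUnion (mem_univ j) ⟨hσ, hj⟩
  obtain ⟨L, hL0, hLsum, hLwalk⟩ := exists_regionWalk_of_closed_cover hI univ hτ hcover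
  let g : ℝ × Fin N → ControlStep A N := fun p => ⟨α, p.1, p.2⟩
  have hwalk := hLwalk.map (d' := ControlStep.disp uL) (R' := fun s => bestResponseRegion s.j)
    (fun σ => P + σ • v) g (fun _ _ hσ => hσ.2)
    (fun p σ => by simp [g, ControlStep.disp, v, add_smul, add_assoc])
  refine ⟨L.map g, ⟨?_, by simpa using hwalk⟩, by simpa [g, Function.comp_def] using hLsum, ?_⟩
  · simp only [List.mem_map]
    rintro _ ⟨p, hp, rfl⟩
    exact ⟨hα, hL0 p hp⟩
  · simp only [List.mem_map]
    rintro _ ⟨p, hp, rfl⟩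
    exact ⟨rfl, hLwalk.nonempty hp⟩

theorem Fin.sum_filter_val_lt_succ {M : Type*} [AddCommMonoid M] {T n : ℕ} (hn : n < T)
    (f : Fin T → M) :
    ∑ s ∈ univ.filter (fun s : Fin T => (s : ℕ) < n + 1), f s =
      ∑ s ∈ univ.filter (fun s : Fin T => (s : ℕ) < n), f s + f ⟨n, hn⟩ := by
  rw [show univ.filter (fun s : Fin T => (s : ℕ) < n + 1) =
      insert ⟨n, hn⟩ (univ.filter fun s : Fin T => (s : ℕ) < n) by
    ext s; simp [Fin.ext_iff]; omega, sum_insert (by simp), add_comm]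

theorem exists_controlPath_rounds [NeZero N] {T : ℕ} (αs : Fin T → A → ℝ)
    (hαs : ∀ t, IsDist (αs t)) {τ : ℝ} (hτ : 0 ≤ τ) (m : Fin T → ℝ)
    (hm : ∀ t j, (∃ σ ∈ Set.Icc 0 τ,
      (∑ s ∈ univ.filter (· < t), τ • learnerPayoff uL (αs s)) + σ • learnerPayoff uL (αs t)
        ∈ bestResponseRegion j) → m t ≤ ∑ a, αs t a * uO a j) :
    ∀ n ≤ T, ∃ π : List (ControlStep A N), IsControlPath uL 0 π ∧ (π.map (·.t)).sum = n * τ ∧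
      (π.map (·.disp uL)).sum =
        ∑ s ∈ univ.filter (fun s : Fin T => (s : ℕ) < n), τ • learnerPayoff uL (αs s) ∧
      τ * ∑ s ∈ univ.filter (fun s : Fin T => (s : ℕ) < n), m s ≤ (π.map (·.utility uO)).sum := by
  intro n hn
  induction n with
  | zero => exact ⟨[], ⟨by simp, trivial⟩, by simp, by simp, by simp⟩
  | succ n ih =>
    obtain ⟨π, hπ, htime, hdisp, hutil⟩ := ih (by omega)
    have hnT : n < T := by omega
    obtain ⟨π', hπ', htime', hround⟩ := exists_controlPath_round (uL := uL)
      (π.map (·.disp uL)).sum (hαs ⟨n, hnT⟩) hτ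
    refine ⟨π ++ π', hπ.append (by simpa using hπ'), by simp [htime, htime']; ring, ?_, ?_⟩
    · rw [List.map_append, List.sum_append, Fin.sum_filter_val_lt_succ hnT, hdisp,
        sum_map_disp_of_forall_α_eq fun s hs => (hround s hs).1, htime']
    · have hm' : ∀ s ∈ π', m ⟨n, hnT⟩ ≤ ∑ a, s.α a * uO a s.j := by
        intro s hs
        obtain ⟨hα, hσ⟩ := hround s hs
        rw [hα]
        refine hm _ _ ?_
        simpa [hdisp, Fin.lt_def] using hσ
      have := mul_le_sum_map_utility (fun s hs => (hπ'.1 s hs).2) hm'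
      rw [List.map_append, List.sum_append, Fin.sum_filter_val_lt_succ hnT, mul_add]
      rw [htime'] at this
      linarith

theorem sum_le_mul_of_isLUB_controlSet [NeZero N] {Ustar : ℝ}
    (hU : IsLUB (ControlSet N uO uL) Ustar) {T : ℕ} (hT : 0 < T) (αs : Fin T → A → ℝ)
    (hαs : ∀ t, IsDist (αs t)) (m : Fin T → ℝ)
    (hm : ∀ t j, (∃ σ ∈ Set.Icc 0 (1 / T : ℝ),
      (∑ s ∈ univ.filter (· < t), (1 / T : ℝ) • learnerPayoff uL (αs s))
        + σ • learnerPayoff uL (αs t) ∈ bestResponseRegion j) →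
      m t ≤ ∑ a, αs t a * uO a j) :
    ∑ t, m t ≤ Ustar * T := by
  have hT0 : (0 : ℝ) < T := by exact_mod_cast hT
  obtain ⟨π, hπ, htime, -, hutil⟩ :=
    exists_controlPath_rounds αs hαs (by positivity) m hm T le_rfl
  have hmem := hπ.utility_mem_controlSet (uO := uO) (by rw [htime]; field_simp)
  rw [show univ.filter (fun s : Fin T => (s : ℕ) < T) = univ by simp] at hutil
  have h := hutil.trans (hU.1 hmem)
  rwa [one_div, inv_mul_le_iff₀ hT0, mul_comm] at h

end ControlProblem

theorem stmt13_general {A : Type*} [Fintype A] {N : ℕ} (hN : 0 < N)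
    (uO uL : A → Fin N → ℝ)
    (hL : ∀ a j, |uL a j| ≤ 1)
    (Ustar : ℝ) (hU : IsLUB (ControlSet N uO uL) Ustar)
    (T : ℕ) (hT : 1 ≤ T) (γ : ℝ) (hγ : 2 / (T : ℝ) < γ)
    (αseq : Fin T → A → ℝ) (hαseq : ∀ t, IsDist (αseq t)) :
    ∑ t : Fin T, sInf {u : ℝ | ∃ j : Fin N,
        (∀ i : Fin N,
          (∑ s ∈ univ.filter (fun s : Fin T => s < t), ∑ a, αseq s a * uL a i)
            - (∑ s ∈ univ.filter (fun s : Fin T => s < t), ∑ a, αseq s a * uL a j)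
            < γ * T) ∧
        u = ∑ a, αseq t a * uO a j}
      ≤ Ustar * T := by
  have : NeZero N := ⟨hN.ne'⟩
  have hT0 : (0 : ℝ) < T := by exact_mod_cast hT
  refine sum_le_mul_of_isLUB_controlSet hU hT αseq hαseq _ fun t j ⟨σ, hσ, hj⟩ => ?_
  refine csInf_le (Set.Finite.bddBelow ?_) ⟨j, fun i => ?_, rfl⟩
  · exact (Set.finite_range fun j => ∑ a, αseq t a * uO a j).subset
      fun _ ⟨j, _, hu⟩ => ⟨j, hu.symm⟩
  · have h := sub_le_of_add_smul_mem_bestResponseRegion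
      (abs_learnerPayoff_le hL (hαseq t)) hσ hj i
    simp only [Finset.sum_apply, Pi.smul_apply, smul_eq_mul, ← Finset.mul_sum, learnerPayoff] at h
    rw [← mul_sub, one_div, inv_mul_le_iff₀ hT0, mul_left_comm, mul_inv_cancel₀ hT0.ne',
      mul_one] at h
    rw [div_lt_iff₀ hT0] at hγ
    linarith

/-- Theorem 6, Part 2 (core inequality).  For any sequence of optimizer mixed
strategies, the sum over rounds of the worst optimizer utility over the set
`J_t` of learner actions whose cumulative utility is within `γT` of the best
is at most `U*·T`. -/
theorem stmt13 {A : Type*} [Fintype A] [Nonempty A] {N : ℕ} (hN : 0 < N)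
    (uO uL : A → Fin N → ℝ)
    (hO : ∀ a j, |uO a j| ≤ 1) (hL : ∀ a j, |uL a j| ≤ 1)
    (Ustar : ℝ) (hU : IsLUB (ControlSet N uO uL) Ustar)
    (T : ℕ) (hT : 1 ≤ T) (γ : ℝ) (hγ : 2 / (T : ℝ) < γ)
    (αseq : Fin T → A → ℝ) (hαseq : ∀ t, IsDist (αseq t)) :
    ∑ t : Fin T, sInf {u : ℝ | ∃ j : Fin N,
        (∀ i : Fin N,
          (∑ s ∈ univ.filter (fun s : Fin T => s < t), ∑ a, αseq s a * uL a i)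
            - (∑ s ∈ univ.filter (fun s : Fin T => s < t), ∑ a, αseq s a * uL a j)
            < γ * T) ∧
        u = ∑ a, αseq t a * uO a j}
      ≤ Ustar * T :=
  stmt13_general hN uO uL hL Ustar hU T hT γ hγ αseq hαseq
end

section
/- Let (A, B, u_O, u_L) be a finite two-player bimatrix game with |u_O|, |u_L| ≤ 1 and B = {b_1, …, b_N}, and assume that every vector in ℝ^N can be written as a nonnegative linear combination of vectors of the form v(α) with α ∈ Δ(A). Let U* be the value of the associated control problem. Suppose there exist P ∈ ℝ^N, λ ≥ 1, and a finite sequence ((α_1, s_1, j_1), …, (α_k, s_k, j_k)) with α_i ∈ Δ(A) and s_i > 0 such that the states Q_0 = P, Q_i = Q_{i−1} + s_i·v(α_i) satisfy Q_{i−1}, Q_i ∈ S_{j_i} for all i, and Q_k = λ·P. Then U* ≥ (Σ_{i=1}^k s_i·u_O(α_i, b_{j_i})) / (Σ_{i=1}^k s_i). -/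
open Finset

lemma aux_abs_avg {X : Type*} [Fintype X] {f u : X → ℝ} (h0 : ∀ x, 0 ≤ f x)
    (h1 : ∑ x, f x = 1) (hu : ∀ x, |u x| ≤ 1) : |∑ x, f x * u x| ≤ 1 := by
  calc |∑ x, f x * u x| ≤ ∑ x, |f x * u x| := Finset.abs_sum_le_sum_abs _ _
    _ ≤ ∑ x, f x := by
        refine Finset.sum_le_sum fun x _ => ?_
        rw [abs_mul, abs_of_nonneg (h0 x)]
        calc f x * |u x| ≤ f x * 1 := mul_le_mul_of_nonneg_left (hu x) (h0 x)
          _ = f x := mul_one _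
    _ = 1 := h1

lemma aux_sum_blocks (n k : ℕ) (g : ℕ → ℝ) :
    ∑ i ∈ range (n * k), g i = ∑ r ∈ range n, ∑ q ∈ range k, g (k * r + q) := by
  induction n with
  | zero => simp
  | succ n ih =>
    rw [Nat.succ_mul, Finset.sum_range_add, ih, Finset.sum_range_succ]
    congr 1
    exact Finset.sum_congr rfl fun q _ => by rw [Nat.mul_comm]

lemma aux_filter_insert (k' m : ℕ) (hm : m < k') :
    (univ.filter (fun l : Fin k' => (l : ℕ) < m + 1))
      = insert ⟨m, hm⟩ (univ.filter fun l : Fin k' => (l : ℕ) < m) := by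
  ext l
  simp only [mem_filter, mem_univ, true_and, mem_insert, Fin.ext_iff]
  omega

set_option maxHeartbeats 1000000 in
/-- If positive combinations of the vectors `v(α)` span `ℝ^N`, and there is a
path of steps starting at `P`, staying in the prescribed regions, and ending at
`λ·P` for some `λ ≥ 1`, then the value `U*` of the control problem is at least
the average utility of the path. -/
theorem stmt15 {A : Type*} [Fintype A] [Nonempty A] {N : ℕ} (hN : 0 < N)
    (uO uL : A → Fin N → ℝ)
    (hO : ∀ a j, |uO a j| ≤ 1) (hL : ∀ a j, |uL a j| ≤ 1)
    (hspan : ∀ w : Fin N → ℝ, ∃ (m : ℕ) (c : Fin m → ℝ) (β : Fin m → A → ℝ),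
      (∀ l, 0 ≤ c l) ∧ (∀ l, IsDist (β l)) ∧
      ∀ j, w j = ∑ l, c l * ∑ a, β l a * uL a j)
    (Ustar : ℝ) (hU : IsLUB (ControlSet N uO uL) Ustar)
    (P : Fin N → ℝ) (lam : ℝ) (hlam : 1 ≤ lam)
    (k : ℕ) (hk : 0 < k)
    (α : Fin k → A → ℝ) (s : Fin k → ℝ) (jv : Fin k → Fin N)
    (hdist : ∀ i, IsDist (α i)) (hs : ∀ i, 0 < s i)
    (Q : ℕ → Fin N → ℝ)
    (hQ : ∀ (m : ℕ) (j : Fin N),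
      Q m j = P j + ∑ l ∈ univ.filter (fun l : Fin k => (l : ℕ) < m),
        s l * ∑ a, α l a * uL a j)
    (hvalid : ∀ (i : Fin k) (j : Fin N),
      Q (i : ℕ) j ≤ Q (i : ℕ) (jv i) ∧ Q ((i : ℕ) + 1) j ≤ Q ((i : ℕ) + 1) (jv i))
    (hcycle : ∀ j, Q k j = lam * P j) :
    (∑ i, s i * ∑ a, α i a * uO a (jv i)) / (∑ i, s i) ≤ Ustar := by
  classical
  set T := ∑ i, s i with hTdef
  have hT : 0 < T := Finset.sum_pos (fun i _ => hs i) ⟨⟨0, hk⟩, mem_univ _⟩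
  set W := ∑ i, s i * ∑ a, α i a * uO a (jv i) with hWdef
  have hWb : |W| ≤ T := by
    calc |W| ≤ ∑ i, |s i * ∑ a, α i a * uO a (jv i)| := Finset.abs_sum_le_sum_abs _ _
      _ ≤ ∑ i, s i := by
          refine Finset.sum_le_sum fun i _ => ?_
          rw [abs_mul, abs_of_nonneg (hs i).le]
          have := aux_abs_avg (hdist i).1 (hdist i).2 (fun a => hO a (jv i))
          calc s i * |∑ a, α i a * uO a (jv i)| ≤ s i * 1 :=
                mul_le_mul_of_nonneg_left this (hs i).le
            _ = s i := mul_one _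
  obtain ⟨m, c, β, hc, hβ, hPspan⟩ := hspan P
  set C := ∑ l, c l with hCdef
  have hC0 : 0 ≤ C := Finset.sum_nonneg fun l _ => hc l
  obtain ⟨γ, hγd, hγP⟩ : ∃ γ : A → ℝ, IsDist γ ∧ ∀ j, C * ∑ a, γ a * uL a j = P j := by
    by_cases hCp : 0 < C
    · refine ⟨fun a => (∑ l, c l * β l a) / C, ⟨?_, ?_⟩, ?_⟩
      · intro a
        exact div_nonneg (Finset.sum_nonneg fun l _ => mul_nonneg (hc l) ((hβ l).1 a)) hC0
      · rw [← Finset.sum_div, Finset.sum_comm]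
        have : ∀ l ∈ univ, ∑ a, c l * β l a = c l := fun l _ => by
          rw [← Finset.mul_sum, (hβ l).2, mul_one]
        rw [Finset.sum_congr rfl this, ← hCdef, div_self hCp.ne']
      · intro j
        have h1 : ∀ a ∈ univ, (∑ l, c l * β l a) / C * uL a j
            = (∑ l, c l * (β l a * uL a j)) / C := fun a _ => by
          rw [div_mul_eq_mul_div, Finset.sum_mul]
          congr 1
          exact Finset.sum_congr rfl fun l _ => by ring
        rw [Finset.sum_congr rfl h1, ← Finset.sum_div, Finset.sum_comm,
          mul_div_cancel₀ _ hCp.ne']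
        rw [hPspan j]
        exact Finset.sum_congr rfl fun l _ => by rw [Finset.mul_sum]
    · have hC : C = 0 := le_antisymm (not_lt.1 hCp) hC0
      have hcl : ∀ l ∈ (univ : Finset (Fin m)), c l = 0 :=
        (Finset.sum_eq_zero_iff_of_nonneg (fun l _ => hc l)).1 hC
      refine ⟨fun _ => (Fintype.card A : ℝ)⁻¹, ⟨fun a => by positivity, ?_⟩, ?_⟩
      · rw [Finset.sum_const, card_univ, nsmul_eq_mul, mul_inv_cancel₀]
        exact Nat.cast_ne_zero.mpr Fintype.card_ne_zero
      · intro j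
        rw [hC, zero_mul, hPspan j]
        exact (Finset.sum_eq_zero fun l hl => by rw [hcl l hl, zero_mul]).symm
  obtain ⟨jstar, hjstar⟩ : ∃ j0 : Fin N, ∀ j, P j ≤ P j0 := by
    have : Nonempty (Fin N) := ⟨⟨0, hN⟩⟩
    exact Finite.exists_max P
  have hQ0 : ∀ j, Q 0 j = P j := by
    intro j; rw [hQ]; simp
  have hQstep : ∀ (i : Fin k) (j : Fin N),
      Q ((i : ℕ) + 1) j = Q i j + s i * ∑ a, α i a * uL a j := by
    intro i j
    rw [hQ, hQ, aux_filter_insert k i i.isLt, Finset.sum_insert (by simp)]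
    simp only [Fin.eta]
    ring
  have hfactor : ∀ (M : ℕ) (j : Fin N),
      lam ^ (M / k) * Q (M % k + 1) j = lam ^ ((M + 1) / k) * Q ((M + 1) % k) j := by
    intro M j
    have hsplit : M + 1 = k * (M / k) + (M % k + 1) := by
      have := Nat.div_add_mod M k; omega
    have hd : (M + 1) / k = M / k + (M % k + 1) / k := by
      conv_lhs => rw [hsplit]
      rw [Nat.mul_add_div hk]
    have hm : (M + 1) % k = (M % k + 1) % k := by
      conv_lhs => rw [hsplit]
      rw [Nat.mul_add_mod]
    by_cases h : M % k + 1 = k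
    · rw [hd, hm, h, Nat.div_self hk, Nat.mod_self, hcycle j, hQ0, pow_succ]
      ring
    · have hlt : M % k + 1 < k := lt_of_le_of_ne (Nat.mod_lt M hk) h
      rw [hd, hm, Nat.div_eq_of_lt hlt, Nat.mod_eq_of_lt hlt]
      norm_num
  refine le_of_forall_pos_le_add fun ε₀ hε₀ => ?_
  obtain ⟨n, hn⟩ := exists_nat_gt (2 * C / (T * ε₀))
  have hn0 : 0 < n := by
    have h1 : (0 : ℝ) ≤ 2 * C / (T * ε₀) := by positivity
    exact_mod_cast lt_of_le_of_lt h1 hn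
  set G := ∑ r ∈ range n, lam ^ r with hGdef
  have hGn : (n : ℝ) ≤ G := by
    rw [hGdef]
    calc (n : ℝ) = ∑ _r ∈ range n, (1 : ℝ) := by simp
      _ ≤ _ := Finset.sum_le_sum fun r _ => one_le_pow₀ hlam
  have hG0 : (0 : ℝ) < G := lt_of_lt_of_le (by exact_mod_cast hn0) hGn
  set D := C + G * T with hDdef
  have hD : 0 < D := add_pos_of_nonneg_of_pos hC0 (mul_pos hG0 hT)
  set eps := 1 / D with hepsdef
  have heps : 0 < eps := by rw [hepsdef]; positivity
  have hepsD : eps * D = 1 := by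
    rw [hepsdef]; field_simp
  set k' := n * k + 1 with hk'def
  set ff : ℕ → Fin k := fun q => ⟨q % k, Nat.mod_lt q hk⟩ with hffdef
  have hffi : ∀ i : Fin k, ff (i : ℕ) = i := fun i => Fin.ext (Nat.mod_eq_of_lt i.isLt)
  have hffmod : ∀ (r q : ℕ) (hq : q < k), ff (k * r + q) = ⟨q, hq⟩ := by
    intro r q hq
    apply Fin.ext
    show (k * r + q) % k = q
    rw [Nat.mul_add_mod, Nat.mod_eq_of_lt hq]
  set αf : ℕ → A → ℝ := fun p => if p = 0 then γ else α (ff (p - 1)) with hαfdef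
  set tf : ℕ → ℝ :=
    fun p => if p = 0 then eps * C else eps * lam ^ ((p - 1) / k) * s (ff (p - 1)) with htfdef
  set jf : ℕ → Fin N := fun p => if p = 0 then jstar else jv (ff (p - 1)) with hjfdef
  have htf0 : tf 0 = eps * C := rfl
  have htfs : ∀ p : ℕ, tf (p + 1) = eps * lam ^ (p / k) * s (ff p) := fun p => by
    simp [htfdef]
  have hαf0 : αf 0 = γ := rfl
  have hαfs : ∀ p : ℕ, αf (p + 1) = α (ff p) := fun p => by simp [hαfdef]
  have hjf0 : jf 0 = jstar := rfl
  have hjfs : ∀ p : ℕ, jf (p + 1) = jv (ff p) := fun p => by simp [hjfdef]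
  have htfblock : ∀ (r q : ℕ) (hq : q < k), tf (k * r + q + 1) = eps * lam ^ r * s ⟨q, hq⟩ := by
    intro r q hq
    rw [htfs, hffmod r q hq, Nat.mul_add_div hk, Nat.div_eq_of_lt hq, Nat.add_zero]
  -- generic sum over the strategy
  have hsum : ∀ F : ℕ → ℝ,
      (∑ i' : Fin k', tf (i' : ℕ) * F (i' : ℕ))
        = eps * C * F 0 + ∑ r ∈ range n, eps * lam ^ r *
            ∑ i : Fin k, s i * F (k * r + (i : ℕ) + 1) := by
    intro F
    rw [Fin.sum_univ_eq_sum_range (fun p => tf p * F p) k', hk'def,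
      Finset.sum_range_succ', aux_sum_blocks, htf0]
    have hblk : ∀ r ∈ range n, ∑ q ∈ range k, tf (k * r + q + 1) * F (k * r + q + 1)
        = eps * lam ^ r * ∑ i : Fin k, s i * F (k * r + (i : ℕ) + 1) := by
      intro r _
      have h2 : ∑ i : Fin k, s i * F (k * r + (i : ℕ) + 1)
          = ∑ q ∈ range k, s (ff q) * F (k * r + (ff q : ℕ) + 1) := by
        rw [← Fin.sum_univ_eq_sum_range (fun q => s (ff q) * F (k * r + (ff q : ℕ) + 1)) k]
        exact Finset.sum_congr rfl fun i _ => by rw [hffi]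
      rw [h2, Finset.mul_sum]
      refine Finset.sum_congr rfl fun q hq => ?_
      have hq' : q < k := mem_range.1 hq
      have hcoe : (ff q : ℕ) = q := Nat.mod_eq_of_lt hq'
      rw [hcoe, htfblock r q hq', show ff q = (⟨q, hq'⟩ : Fin k) from Fin.ext hcoe]
      ring
    rw [Finset.sum_congr rfl hblk]
    ring
  have htime : ∑ i' : Fin k', tf (i' : ℕ) = 1 := by
    have h1 := hsum (fun _ => 1)
    simp only [mul_one] at h1
    rw [h1]
    have h2 : ∀ r ∈ range n, eps * lam ^ r * T = eps * T * lam ^ r := fun r _ => by ring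
    rw [show (∑ r ∈ range n, eps * lam ^ r * ∑ i : Fin k, s i)
        = ∑ r ∈ range n, eps * T * lam ^ r from Finset.sum_congr rfl fun r hr => by
          rw [← hTdef]; ring]
    rw [← Finset.mul_sum, ← hGdef]
    have : eps * C + eps * T * G = eps * D := by rw [hDdef]; ring
    rw [this, hepsD]
  -- partial-sum states
  set PS : ℕ → Fin N → ℝ := fun p j =>
    ∑ l ∈ univ.filter (fun l : Fin k' => (l : ℕ) < p),
      tf (l : ℕ) * ∑ a, αf (l : ℕ) a * uL a j with hPSdef
  have hPS0 : ∀ j, PS 0 j = 0 := by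
    intro j
    simp [hPSdef]
  have hPSrec : ∀ p, p < k' → ∀ j,
      PS (p + 1) j = PS p j + tf p * ∑ a, αf p a * uL a j := by
    intro p hp j
    simp only [hPSdef]
    rw [aux_filter_insert k' p hp, Finset.sum_insert (by simp)]
    ring
  have hPkey : ∀ M, M ≤ n * k → ∀ j,
      PS (M + 1) j = eps * (lam ^ (M / k) * Q (M % k) j) := by
    intro M
    induction M with
    | zero =>
      intro _ j
      rw [hPSrec 0 (by omega), hPS0, zero_add, htf0, hαf0,
        Nat.zero_div, Nat.zero_mod, pow_zero, one_mul, hQ0 j, ← hγP j]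
      ring
    | succ M ih =>
      intro hM j
      have hM' : M ≤ n * k := by omega
      rw [hPSrec (M + 1) (by omega), ih hM' j, htfs, hαfs, ← hfactor M j]
      have hQs := hQstep (ff M) j
      have hcoe : (ff M : ℕ) = M % k := rfl
      rw [hcoe] at hQs
      rw [hQs]
      ring
  set uγ := ∑ a, γ a * uO a jstar with huγdef
  have hutil : (∑ i' : Fin k', tf (i' : ℕ) * ∑ a, αf (i' : ℕ) a * uO a (jf (i' : ℕ)))
      = eps * C * uγ + eps * G * W := by
    rw [hsum (fun p => ∑ a, αf p a * uO a (jf p))]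
    rw [hαf0, hjf0, ← huγdef]
    congr 1
    have hblk : ∀ r ∈ range n,
        eps * lam ^ r * ∑ i : Fin k, s i * ∑ a, αf (k * r + (i : ℕ) + 1) a
            * uO a (jf (k * r + (i : ℕ) + 1))
          = eps * W * lam ^ r := by
      intro r _
      have hin : ∀ i ∈ (univ : Finset (Fin k)),
          s i * ∑ a, αf (k * r + (i : ℕ) + 1) a * uO a (jf (k * r + (i : ℕ) + 1))
            = s i * ∑ a, α i a * uO a (jv i) := by
        intro i _
        rw [hαfs, hjfs, hffmod r (i : ℕ) i.isLt]
      rw [Finset.sum_congr rfl hin, ← hWdef]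
      ring
    rw [Finset.sum_congr rfl hblk, ← Finset.mul_sum, ← hGdef]
    ring
  have hfilter_le : ∀ p : ℕ, (univ.filter fun l : Fin k' => (l : ℕ) ≤ p)
      = univ.filter fun l : Fin k' => (l : ℕ) < p + 1 := by
    intro p
    ext l
    simp [Nat.lt_succ_iff]
  have hmem : (eps * C * uγ + eps * G * W) ∈ ControlSet N uO uL := by
    refine ⟨k', fun i' => αf (i' : ℕ), fun i' => tf (i' : ℕ), fun i' => jf (i' : ℕ),
      ?_, ?_, htime, ?_, hutil.symm⟩
    · intro i'
      show IsDist (αf (i' : ℕ))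
      rcases Nat.eq_zero_or_pos (i' : ℕ) with h | h
      · rw [h, hαf0]; exact hγd
      · obtain ⟨p, hp⟩ := Nat.exists_eq_succ_of_ne_zero h.ne'
        rw [hp, hαfs]; exact hdist _
    · intro i'
      show 0 ≤ tf (i' : ℕ)
      rcases Nat.eq_zero_or_pos (i' : ℕ) with h | h
      · rw [h, htf0]; exact mul_nonneg heps.le hC0
      · obtain ⟨p, hp⟩ := Nat.exists_eq_succ_of_ne_zero h.ne'
        rw [hp, htfs]
        exact mul_nonneg (mul_nonneg heps.le
          (pow_nonneg (le_trans zero_le_one hlam) _)) (hs _).le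
    · intro i' j
      have hgoal1 : ∀ (j' : Fin N),
          (∑ l ∈ univ.filter (fun l : Fin k' => (l : ℕ) < (i' : ℕ)),
            tf (l : ℕ) * ∑ a, αf (l : ℕ) a * uL a j') = PS (i' : ℕ) j' := fun _ => rfl
      have hgoal2 : ∀ (j' : Fin N),
          (∑ l ∈ univ.filter (fun l : Fin k' => (l : ℕ) ≤ (i' : ℕ)),
            tf (l : ℕ) * ∑ a, αf (l : ℕ) a * uL a j') = PS ((i' : ℕ) + 1) j' := fun j' => by
        rw [hfilter_le]
      have hpow0 : (0:ℝ) ≤ lam := le_trans zero_le_one hlam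
      constructor
      · rw [hgoal1 j, hgoal1 (jf (i' : ℕ))]
        rcases Nat.eq_zero_or_pos (i' : ℕ) with h | h
        · rw [h, hPS0, hPS0]
        · obtain ⟨M, hp⟩ := Nat.exists_eq_succ_of_ne_zero h.ne'
          have hM : M ≤ n * k := by
            have := i'.isLt
            omega
          rw [hp, hPkey M hM j, hPkey M hM (jf (M + 1)), hjfs]
          have hv := (hvalid (ff M) j).1
          have hcoe : (ff M : ℕ) = M % k := rfl
          rw [hcoe] at hv
          have h1 : lam ^ (M / k) * Q (M % k) j ≤ lam ^ (M / k) * Q (M % k) (jv (ff M)) :=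
            mul_le_mul_of_nonneg_left hv (pow_nonneg hpow0 _)
          exact mul_le_mul_of_nonneg_left h1 heps.le
      · rw [hgoal2 j, hgoal2 (jf (i' : ℕ))]
        rcases Nat.eq_zero_or_pos (i' : ℕ) with h | h
        · rw [h, hjf0, hPkey 0 (by omega) j, hPkey 0 (by omega) jstar,
            Nat.zero_div, Nat.zero_mod, pow_zero, one_mul, one_mul, hQ0, hQ0]
          exact mul_le_mul_of_nonneg_left (hjstar j) heps.le
        · obtain ⟨M, hp⟩ := Nat.exists_eq_succ_of_ne_zero h.ne'
          have hM : M + 1 ≤ n * k := by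
            have := i'.isLt
            omega
          rw [hp, hPkey (M + 1) hM j, hPkey (M + 1) hM (jf (M + 1)), hjfs,
            ← hfactor M j, ← hfactor M (jv (ff M))]
          have hv := (hvalid (ff M) j).2
          have hcoe : (ff M : ℕ) = M % k := rfl
          rw [hcoe] at hv
          have h1 : lam ^ (M / k) * Q (M % k + 1) j
              ≤ lam ^ (M / k) * Q (M % k + 1) (jv (ff M)) :=
            mul_le_mul_of_nonneg_left hv (pow_nonneg hpow0 _)
          exact mul_le_mul_of_nonneg_left h1 heps.le
  have hx : eps * C * uγ + eps * G * W ≤ Ustar := hU.1 hmem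
  have huγ : |uγ| ≤ 1 := aux_abs_avg hγd.1 hγd.2 (fun a => hO a jstar)
  set z := W / T with hz
  have hWz : W = z * T := by rw [hz]; field_simp
  have h2 : eps * (C + G * T) = 1 := by rw [← hDdef]; exact hepsD
  have key : z = eps * C * uγ + eps * G * W + eps * C * (z - uγ) := by
    rw [hWz]; linear_combination (-z) * h2
  have hz1 : z ≤ 1 := by
    rw [hz, div_le_one hT]; exact (abs_le.1 hWb).2
  have huγ' : -1 ≤ uγ := (abs_le.1 huγ).1
  have hDn : (n : ℝ) * T ≤ D := by
    rw [hDdef]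
    nlinarith
  have hn' : 2 * C < (n : ℝ) * (T * ε₀) := (div_lt_iff₀ (by positivity)).1 hn
  have hrem : eps * C * (z - uγ) ≤ ε₀ := by
    have h3 : eps * C * (z - uγ) ≤ eps * C * 2 :=
      mul_le_mul_of_nonneg_left (by linarith) (mul_nonneg heps.le hC0)
    have A1 : eps * ((n : ℝ) * T) ≤ 1 := by
      calc eps * ((n : ℝ) * T) ≤ eps * D := mul_le_mul_of_nonneg_left hDn heps.le
        _ = 1 := hepsD
    have A2 : eps * (2 * C) < eps * ((n : ℝ) * (T * ε₀)) := mul_lt_mul_of_pos_left hn' heps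
    have A3 : eps * ((n : ℝ) * (T * ε₀)) = (eps * ((n : ℝ) * T)) * ε₀ := by ring
    have A4 : (eps * ((n : ℝ) * T)) * ε₀ ≤ 1 * ε₀ := mul_le_mul_of_nonneg_right A1 hε₀.le
    linarith
  linarith [hx, key, hrem]
end
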